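/- arXiv:1105.1764 — 4 statements merged into one kernel-verified Lean document; each statement's English description precedes it below -/
import Mathlib

section
/- If H is a 1-extendable finite simple graph with at least two perfect matchings, then H is 2-connected (H has at least three vertices and there is no vertex x such that H − x is disconnected). -/
open SimpleGraph

variable {V : Type}

/-- The number of perfect matchings of a simple graph. -/
noncomputable def numPM (G : SimpleGraph V) : ℕ :=
  Nat.card {M : G.Subgraph // M.IsPerfectMatching}

/-- An edge, given by its two endpoints, is extendable if it lies in some perfect matching. -/
def IsExtendableEdge (G : SimpleGraph V) (u v : V) : Prop :=
  ∃ M : G.Subgraph, M.IsPerfectMatching ∧ M.Adj u v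

/-- A connected graph is 1-extendable if it has a perfect matching and every edge is
extendable. -/
def OneExtendable (G : SimpleGraph V) : Prop :=
  G.Connected ∧ (∃ M : G.Subgraph, M.IsPerfectMatching) ∧
    ∀ ⦃u v : V⦄, G.Adj u v → IsExtendableEdge G u v

/-- The number of connected components of `G - S` with an odd number of vertices. -/
noncomputable def oddComponentCount (G : SimpleGraph V) (S : Set V) : ℕ :=
  Nat.card {c : (G.induce (Sᶜ : Set V)).ConnectedComponent // Odd (Nat.card c.supp)}

/-- `S` is a barrier of `G` if the number of odd components of `G - S` equals `|S|`. -/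
def IsBarrier (G : SimpleGraph V) (S : Set V) : Prop :=
  oddComponentCount G S = S.ncard

/-- A maximal barrier is a barrier not properly contained in any other barrier. -/
def IsMaximalBarrier (G : SimpleGraph V) (S : Set V) : Prop :=
  IsBarrier G S ∧ ∀ T : Set V, IsBarrier G T → S ⊆ T → T = S

/-- `ℰ(H)`: the supergraphs of `H` on the same vertex set with the same number of
perfect matchings. -/
def elemSupergraphs (H : SimpleGraph V) : Set (SimpleGraph V) :=
  {G | H ≤ G ∧ numPM G = numPM H}

/-- The excess of a graph: `e(G) - n(G)^2/4`. -/
noncomputable def excess (G : SimpleGraph V) : ℚ :=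
  (G.edgeSet.ncard : ℚ) - (Nat.card V : ℚ) ^ 2 / 4

/-- The spanning subgraph of `G` consisting of the free (non-extendable) edges. -/
def freeSubgraph (G : SimpleGraph V) : SimpleGraph V where
  Adj u v := G.Adj u v ∧ ¬ IsExtendableEdge G u v
  symm := by
    constructor
    intro u v h
    refine ⟨h.1.symm, fun hc => h.2 ?_⟩
    obtain ⟨M, hM, hadj⟩ := hc
    exact ⟨M, hM, hadj.symm⟩
  loopless := ⟨fun v h => G.loopless.irrefl v h.1⟩

/-- The graph obtained from `H` by simultaneously augmenting `m` ears; the `j`-th ear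
joins `x j` to `y j` and has `ℓ j` internal vertices (its order). -/
def earsAugment (H : SimpleGraph V) (m : ℕ) (x y : Fin m → V) (ℓ : Fin m → ℕ) :
    SimpleGraph (V ⊕ (Σ j : Fin m, Fin (ℓ j))) :=
  SimpleGraph.fromRel fun a b =>
    match a, b with
    | Sum.inl u, Sum.inl v => H.Adj u v ∨ ∃ j, ℓ j = 0 ∧ u = x j ∧ v = y j
    | Sum.inl u, Sum.inr ⟨j, i⟩ => u = x j ∧ (i : ℕ) = 0
    | Sum.inr ⟨j, i⟩, Sum.inl u => u = y j ∧ (i : ℕ) + 1 = ℓ j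
    | Sum.inr ⟨j, i⟩, Sum.inr ⟨j', i'⟩ => j = j' ∧ (i : ℕ) + 1 = (i' : ℕ)

/-- Validity conditions for a system of (even-order) ears attached to `H`:
distinct endpoints, even orders, trivial ears are new edges, and distinct trivial ears
are distinct edges. -/
def IsEarSystem (H : SimpleGraph V) (m : ℕ) (x y : Fin m → V) (ℓ : Fin m → ℕ) : Prop :=
  (∀ j, x j ≠ y j) ∧ (∀ j, Even (ℓ j)) ∧
  (∀ j, ℓ j = 0 → ¬ H.Adj (x j) (y j)) ∧
  (∀ j j', j ≠ j' → ℓ j = 0 → ℓ j' = 0 → s(x j, y j) ≠ s(x j', y j'))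

/-- A single-ear augmentation of `H` by an ear from `a` to `b` with `l` internal
vertices. -/
def singleEar (H : SimpleGraph V) (a b : V) (l : ℕ) :
    SimpleGraph (V ⊕ (Σ _ : Fin 1, Fin l)) :=
  earsAugment H 1 (fun _ => a) (fun _ => b) (fun _ => l)

/-- `B` meets more than one connected component of `H - S`. -/
def MeetsMultipleComponents (H : SimpleGraph V) (S B : Set V) : Prop :=
  ∃ c₁ c₂ : (H.induce (Sᶜ : Set V)).ConnectedComponent, c₁ ≠ c₂ ∧
    (∃ v ∈ c₁.supp, (v : V) ∈ B) ∧ (∃ v ∈ c₂.supp, (v : V) ∈ B)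

/-- Two barriers conflict if they intersect, or one meets more than one component of the
graph minus the other. -/
def BarriersConflict (H : SimpleGraph V) (B₁ B₂ : Set V) : Prop :=
  (B₁ ∩ B₂).Nonempty ∨ MeetsMultipleComponents H B₂ B₁ ∨ MeetsMultipleComponents H B₁ B₂

/-- A cover set of `H`: a partition of `V(H)` into pairwise non-conflicting nonempty
barriers. -/
def IsCoverSet (H : SimpleGraph V) (I : Set (Set V)) : Prop :=
  (∀ B ∈ I, B.Nonempty ∧ IsBarrier H B) ∧
  (∀ B₁ ∈ I, ∀ B₂ ∈ I, B₁ ≠ B₂ → ¬ BarriersConflict H B₁ B₂) ∧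
  ∀ v : V, ∃! B, B ∈ I ∧ v ∈ B

/-- The order `𝓘₁ ⪯ 𝓘₂` on cover sets: every part of `𝓘₁` is contained in a part of
`𝓘₂`. -/
def CoverLE (I₁ I₂ : Set (Set V)) : Prop :=
  ∀ B₁ ∈ I₁, ∃ B₂ ∈ I₂, B₁ ⊆ B₂

/-- The graph `H_𝓘` obtained from `H` by adding all possible edges inside each part of
`𝓘`. -/
def fillGraph (H : SimpleGraph V) (I : Set (Set V)) : SimpleGraph V :=
  H ⊔ SimpleGraph.fromRel fun u v => ∃ B ∈ I, u ∈ B ∧ v ∈ B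

/-- The graph obtained from `H` by adding all possible edges inside the set `X`. -/
def fillSide (H : SimpleGraph V) (X : Set V) : SimpleGraph V :=
  H ⊔ SimpleGraph.fromRel fun u v => u ∈ X ∧ v ∈ X

/-- A (connected, 2-regular) cycle graph. -/
def IsCycleGraph (G : SimpleGraph V) : Prop :=
  G.Connected ∧ ∀ v : V, (G.neighborSet v).ncard = 2

/-- An ear of `H`: a path `f 0, f 1, ..., f k` whose endpoints have degree at least three
and whose internal vertices have degree exactly two. -/
def IsEar (H : SimpleGraph V) (k : ℕ) (f : Fin (k + 1) → V) : Prop :=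
  1 ≤ k ∧ Function.Injective f ∧
  (∀ i : Fin k, H.Adj (f i.castSucc) (f i.succ)) ∧
  3 ≤ (H.neighborSet (f 0)).ncard ∧
  3 ≤ (H.neighborSet (f (Fin.last k))).ncard ∧
  ∀ i : Fin (k + 1), i ≠ 0 → i ≠ Fin.last k → (H.neighborSet (f i)).ncard = 2

/-- The edge `uv` lies on the path `f 0, ..., f k`. -/
def EdgeOnPath (k : ℕ) (f : Fin (k + 1) → V) (u v : V) : Prop :=
  ∃ i : Fin k, (u = f i.castSucc ∧ v = f i.succ) ∨ (v = f i.castSucc ∧ u = f i.succ)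

/-- A graph is almost 1-extendable if it has a perfect matching and all of its free edges
lie on a single ear (the whole graph counting as an ear when it is a cycle). -/
def AlmostOneExtendable (G : SimpleGraph V) : Prop :=
  (∃ M : G.Subgraph, M.IsPerfectMatching) ∧
  (IsCycleGraph G ∨
    ∃ (k : ℕ) (f : Fin (k + 1) → V), IsEar G k f ∧
      ∀ u v : V, G.Adj u v → ¬ IsExtendableEdge G u v → EdgeOnPath k f u v)

/-- A graph with at least three vertices is 2-connected if no single vertex deletion
disconnects it. -/
def TwoConnected (G : SimpleGraph V) : Prop :=
  3 ≤ Nat.card V ∧ ∀ v : V, (G.induce ({v}ᶜ : Set V)).Connected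

/-- Membership in the class `𝓜ᵖ`: 2-connected graphs with between 2 and `p` perfect
matchings which are 1-extendable or almost 1-extendable. -/
def MemM (p : ℕ) (G : SimpleGraph V) : Prop :=
  TwoConnected G ∧ 2 ≤ numPM G ∧ numPM G ≤ p ∧
    (OneExtendable G ∨ AlmostOneExtendable G)

/-- `a` and `b` lie in different connected components of `H - B`. -/
def InDiffComponents (H : SimpleGraph V) (B : Set V) (a b : V) : Prop :=
  ∃ (ha : a ∈ (Bᶜ : Set V)) (hb : b ∈ (Bᶜ : Set V)),
    (H.induce (Bᶜ : Set V)).connectedComponentMk ⟨a, ha⟩ ≠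
      (H.induce (Bᶜ : Set V)).connectedComponentMk ⟨b, hb⟩

/-- The `a`-th vertex `x_a` along the `j`-th ear `x 0 = x_0, x_1, ..., x_{ℓ j}, x_{ℓ j + 1} = y j`. -/
def earVertex {m : ℕ} (x y : Fin m → V) (ℓ : Fin m → ℕ) (j : Fin m) (a : ℕ) :
    V ⊕ (Σ j : Fin m, Fin (ℓ j)) :=
  if h : 0 < a ∧ a ≤ ℓ j then Sum.inr ⟨j, ⟨a - 1, by omega⟩⟩
  else if a = 0 then Sum.inl (x j) else Sum.inl (y j)

/-- Non-refinability of a two-ear augmentation: neither single-ear augmentation is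
1-extendable. -/
def NonRefinableSystem (H : SimpleGraph V) (m : ℕ) (x y : Fin m → V) (ℓ : Fin m → ℕ) :
    Prop :=
  ∀ j : Fin m, m = 2 → ¬ OneExtendable (singleEar H (x j) (y j) (ℓ j))

/-!
Fix a perfect matching `M` and a component `C` of `H - x`. Since `x` is the only vertex outside
`C` with neighbours in `C`, the set `C` is a union of `M`-edges when `x` is matched outside `C`,
and `C` minus the partner of `x` is one when `x` is matched into `C`; so `|C|` is even in the
first case and odd in the second. If `H - x` were disconnected, some component `C` would avoid
the partner of `x` in a fixed perfect matching, while the connectivity of `H` gives an edge `xz`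
with `z ∈ C`, which lies in another perfect matching by 1-extendability. Three vertices come
from a vertex that has different partners in two distinct perfect matchings.
-/

namespace SimpleGraph

variable {H : SimpleGraph V}

namespace Subgraph.IsPerfectMatching

variable {M : H.Subgraph}

lemma even_ncard_of_closed [Finite V] (hM : M.IsPerfectMatching) {s : Set V}
    (hs : ∀ v ∈ s, ∀ w, M.Adj v w → w ∈ s) : Even s.ncard := by
  have hmatch : (M.induce s).IsMatching := fun v hv => by
    obtain ⟨w, hw, huniq⟩ := hM.1 (hM.2 v)
    exact ⟨w, ⟨hv, hs v hv w hw, hw⟩, fun u hu => huniq u hu.2.2⟩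
  have := Fintype.ofFinite (M.induce s).verts
  have := hmatch.even_card
  rwa [Set.toFinset_card, ← Nat.card_eq_fintype_card, Nat.card_coe_set_eq,
    Subgraph.induce_verts] at this

variable {s : Set V} {x : V}

lemma even_ncard_of_partner_not_mem [Finite V] (hM : M.IsPerfectMatching)
    (hs : ∀ v ∈ s, ∀ w, H.Adj v w → w ∈ s ∨ w = x) {y : V} (hxy : M.Adj x y) (hy : y ∉ s) :
    Even s.ncard :=
  hM.even_ncard_of_closed fun v hv w hvw =>
    (hs v hv w (M.adj_sub hvw)).resolve_right fun hwx => by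
      subst hwx
      exact hy (hM.1.eq_of_adj_left hvw.symm hxy ▸ hv)

lemma odd_ncard_of_partner_mem [Finite V] (hM : M.IsPerfectMatching)
    (hs : ∀ v ∈ s, ∀ w, H.Adj v w → w ∈ s ∨ w = x) (hx : x ∉ s) {z : V} (hxz : M.Adj x z)
    (hz : z ∈ s) : Odd s.ncard := by
  have heven : Even (s \ {z}).ncard := hM.even_ncard_of_closed fun v ⟨hv, hvz⟩ w hvw => by
    rcases hs v hv w (M.adj_sub hvw) with hw | rfl
    · refine ⟨hw, fun hwz => ?_⟩
      rw [Set.mem_singleton_iff] at hwz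
      subst hwz
      exact hx (hM.1.eq_of_adj_right hvw hxz ▸ hv)
    · exact absurd (hM.1.eq_of_adj_left hvw.symm hxz) hvz
  have hpos : 0 < s.ncard := (Set.nonempty_of_mem hz).ncard_pos
  rw [Set.ncard_sdiff_singleton_of_mem hz, Nat.even_iff] at heven
  rw [Nat.odd_iff]
  omega

end Subgraph.IsPerfectMatching

lemma Subgraph.exists_adj_adj_ne_of_ne {M₁ M₂ : H.Subgraph} (h₁ : M₁.IsPerfectMatching)
    (h₂ : M₂.IsPerfectMatching) (hne : M₁ ≠ M₂) :
    ∃ u v w, M₁.Adj u v ∧ M₂.Adj u w ∧ v ≠ w := by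
  by_contra! h
  refine hne (Subgraph.ext (by rw [h₁.2.verts_eq_univ, h₂.2.verts_eq_univ]) ?_)
  ext u v
  constructor
  · intro huv
    obtain ⟨w, huw, -⟩ := h₂.1 (h₂.2 u)
    exact h u v w huv huw ▸ huw
  · intro huv
    obtain ⟨w, huw, -⟩ := h₁.1 (h₁.2 u)
    exact (h u w v huw huv).symm ▸ huw

namespace ConnectedComponent

variable {S : Set V} (c : (H.induce Sᶜ).ConnectedComponent)

lemma mem_image_val_supp_or_mem_of_adj {v w : V} (hv : v ∈ ((↑) '' c.supp : Set V))
    (hvw : H.Adj v w) : w ∈ ((↑) '' c.supp : Set V) ∨ w ∈ S := by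
  obtain ⟨v, hv, rfl⟩ := hv
  by_cases hw : w ∈ S
  · exact Or.inr hw
  · exact Or.inl ⟨⟨w, hw⟩, c.mem_supp_of_adj_mem_supp hv hvw, rfl⟩

lemma exists_adj_of_connected (hH : H.Connected) (hS : S.Nonempty) :
    ∃ v ∈ ((↑) '' c.supp : Set V), ∃ w ∈ S, H.Adj v w := by
  obtain ⟨u, hu⟩ := c.nonempty_supp
  obtain ⟨x, hx⟩ := hS
  obtain ⟨d, -, hd, hd'⟩ := (hH u x).some.exists_boundary_dart ((↑) '' c.supp) ⟨u, hu, rfl⟩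
    fun ⟨v, _, hv⟩ => v.2 (hv ▸ hx)
  exact ⟨d.fst, hd, d.snd, (c.mem_image_val_supp_or_mem_of_adj hd d.adj).resolve_left hd', d.adj⟩

end ConnectedComponent

end SimpleGraph

open SimpleGraph

lemma three_le_card_of_two_le_numPM [Finite V] {H : SimpleGraph V} (h : 2 ≤ numPM H) :
    3 ≤ Nat.card V := by
  have : Finite {M : H.Subgraph // M.IsPerfectMatching} :=
    Nat.finite_of_card_ne_zero (by unfold numPM at h; omega)
  obtain ⟨⟨M₁, h₁⟩, ⟨M₂, h₂⟩, hne⟩ := (Finite.one_lt_card_iff_nontrivial.mp h).exists_pair_ne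
  obtain ⟨u, v, w, huv, huw, hvw⟩ :=
    Subgraph.exists_adj_adj_ne_of_ne h₁ h₂ fun h => hne (Subtype.ext h)
  have := Fintype.ofFinite V
  rw [Nat.card_eq_fintype_card]
  exact Fintype.two_lt_card_iff.mpr ⟨u, v, w, (M₁.adj_sub huv).ne, (M₂.adj_sub huw).ne, hvw⟩

/-- A 1-extendable graph with at least two perfect matchings is
2-connected: it has at least three vertices and no vertex deletion disconnects it. -/
theorem oneExtendable_twoConnected [Finite V] (H : SimpleGraph V)
    (h1 : OneExtendable H) (h2 : 2 ≤ numPM H) :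
    3 ≤ Nat.card V ∧ ∀ x : V, (H.induce ({x}ᶜ : Set V)).Connected := by
  obtain ⟨hconn, ⟨M, hM⟩, hext⟩ := h1
  refine ⟨three_le_card_of_two_le_numPM h2, fun x => ?_⟩
  obtain ⟨y, hxy, -⟩ := hM.1 (hM.2 x)
  refine (connected_iff_exists_forall_reachable _).mpr ⟨⟨y, (M.adj_sub hxy).ne'⟩, fun w => ?_⟩
  by_contra hyw
  let c := (H.induce {x}ᶜ).connectedComponentMk w
  let s : Set V := (↑) '' c.supp
  have hbd : ∀ v ∈ s, ∀ u, H.Adj v u → u ∈ s ∨ u = x :=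
    fun _ hv _ => c.mem_image_val_supp_or_mem_of_adj hv
  have hx : x ∉ s := fun ⟨v, _, hv⟩ => v.2 hv
  have hy : y ∉ s := fun ⟨v, hv, hvy⟩ => by
    subst hvy
    exact hyw (c.reachable_of_mem_supp hv ConnectedComponent.connectedComponentMk_mem)
  obtain ⟨z, hz, _, rfl, hzx⟩ := c.exists_adj_of_connected hconn (Set.singleton_nonempty x)
  obtain ⟨M', hM', hxz⟩ := hext hzx.symm
  exact Nat.not_even_iff_odd.mpr (hM'.odd_ncard_of_partner_mem hbd hx hxz hz)
    (hM.even_ncard_of_partner_not_mem hbd hxy hy)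
end

section
/- Let H be a 1-extendable graph and let G be a maximal element of the poset (ℰ(H), ⊆). Then every maximal barrier of G is a clique in G all of whose edges are free edges of G. -/
open SimpleGraph

variable {V : Type}

/-! A perfect matching of `G` matches every odd component of `G - S` to a vertex of `S`, and
distinct odd components to distinct vertices. When `S` is a barrier this uses up all of `S`,
so no perfect matching has an edge inside `S`: such edges are free. For the same reason,
adding an edge inside a barrier `B` (which stays a barrier, `G - B` being unchanged) creates
no new perfect matching, so maximality of `G` in `ℰ(H)` forces `B` to be a clique. -/

namespace SimpleGraph.Subgraph.IsPerfectMatching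

variable {G : SimpleGraph V} {M : G.Subgraph}

theorem exists_adj_of_odd_card_supp [Finite V] (hM : M.IsPerfectMatching) {S : Set V}
    (c : (G.induce Sᶜ).ConnectedComponent) (hc : Odd (Nat.card c.supp)) :
    ∃ s ∈ S, ∃ w ∈ c.supp, M.Adj s w := by
  by_contra! h
  -- the partner of a vertex of `c` is then a neighbour outside `S`, hence again in `c`
  have hmatch : (M.induce (Subtype.val '' c.supp)).IsMatching := by
    rintro _ ⟨v, hv, rfl⟩
    obtain ⟨w, hvw, hw⟩ := hM.1 (hM.2 v)
    have hwS : w ∈ Sᶜ := fun hwS => h w hwS v hv hvw.symm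
    have hwc : ⟨w, hwS⟩ ∈ c.supp := by
      rw [ConnectedComponent.mem_supp_iff] at hv ⊢
      exact hv ▸ ConnectedComponent.connectedComponentMk_eq_of_adj (M.adj_sub hvw).symm
    exact ⟨w, ⟨⟨v, hv, rfl⟩, ⟨_, hwc, rfl⟩, hvw⟩, fun y hy => hw y hy.2.2⟩
  have := Fintype.ofFinite (M.induce (Subtype.val '' c.supp)).verts
  have heven := hmatch.even_card
  rw [Set.toFinset_card, ← Nat.card_eq_fintype_card, Subgraph.induce_verts,
    Nat.card_image_of_injective Subtype.val_injective] at heven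
  exact Nat.not_even_iff_odd.2 hc heven

end SimpleGraph.Subgraph.IsPerfectMatching

theorem IsBarrier.not_adj_of_isPerfectMatching [Finite V] {G : SimpleGraph V} {S : Set V}
    (hS : IsBarrier G S) {M : G.Subgraph} (hM : M.IsPerfectMatching) {u v : V}
    (hu : u ∈ S) (hv : v ∈ S) : ¬ M.Adj u v := by
  intro huv
  choose f hf g hg hfg using fun c : {c : (G.induce Sᶜ).ConnectedComponent //
    Odd (Nat.card c.supp)} => hM.exists_adj_of_odd_card_supp c.1 c.2
  -- the odd components inject into `S \ {u}`, since `u` is matched inside `S`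
  have hfu : ∀ c, f c ≠ u := fun c hcu =>
    (g c).2 (hM.1.eq_of_adj_left (hcu ▸ hfg c) huv ▸ hv)
  have hinj : Function.Injective fun c => (⟨f c, hf c, hfu c⟩ : ↥(S \ {u})) := by
    intro c d hcd
    have hfcd : f c = f d := congrArg Subtype.val hcd
    have hgcd : g c = g d := Subtype.val_injective <| hM.1.eq_of_adj_left (hfg c) (hfcd ▸ hfg d)
    exact Subtype.val_injective <|
      ConnectedComponent.eq_of_common_vertex (hg c) (hgcd ▸ hg d)
  have hle := Nat.card_le_card_of_injective _ hinj
  rw [Nat.card_coe_set_eq] at hle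
  have hlt := Set.ncard_sdiff_singleton_lt_of_mem hu (Set.toFinite S)
  unfold IsBarrier oddComponentCount at hS
  omega

theorem induce_compl_sup_edge_of_mem {G : SimpleGraph V} {S : Set V} {u : V} (hu : u ∈ S)
    (v : V) : (G ⊔ edge u v).induce Sᶜ = G.induce Sᶜ := by
  ext a b
  simp only [comap_adj, sup_adj, edge_adj, Function.Embedding.subtype_apply, or_iff_left_iff_imp]
  rintro ⟨⟨rfl, -⟩ | ⟨-, rfl⟩, -⟩
  exacts [absurd hu a.2, absurd hu b.2]

theorem IsBarrier.sup_edge {G : SimpleGraph V} {S : Set V} (hS : IsBarrier G S) {u : V}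
    (hu : u ∈ S) (v : V) : IsBarrier (G ⊔ edge u v) S := by
  rwa [IsBarrier, oddComponentCount, induce_compl_sup_edge_of_mem hu]

theorem numPM_eq_of_le {G K : SimpleGraph V} (hGK : G ≤ K)
    (hK : ∀ M : K.Subgraph, M.IsPerfectMatching → M.spanningCoe ≤ G) :
    numPM K = numPM G :=
  Nat.card_congr
    { toFun := fun M => ⟨G.toSubgraph M.1.spanningCoe (hK M.1 M.2),
        (Subgraph.IsPerfectMatching.toSubgraph_iff _).2 M.2⟩
      invFun := fun M => ⟨K.toSubgraph M.1.spanningCoe (M.1.spanningCoe_le.trans hGK),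
        (Subgraph.IsPerfectMatching.toSubgraph_iff _).2 M.2⟩
      left_inv := fun M => Subtype.ext <| Subgraph.ext M.2.2.verts_eq_univ.symm rfl
      right_inv := fun M => Subtype.ext <| Subgraph.ext M.2.2.verts_eq_univ.symm rfl }

theorem IsBarrier.numPM_sup_edge [Finite V] {G : SimpleGraph V} {S : Set V}
    (hS : IsBarrier G S) {u v : V} (hu : u ∈ S) (hv : v ∈ S) :
    numPM (G ⊔ edge u v) = numPM G :=
  numPM_eq_of_le le_sup_left fun _ hM =>
    Subgraph.spanningCoe_sup_edge_le _ <|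
      (hS.sup_edge hu v).not_adj_of_isPerfectMatching hM hu hv

theorem maximal_elemSupergraph_barriers_are_free_cliques_general [Finite V]
    (H G : SimpleGraph V)
    (hG : G ∈ elemSupergraphs H)
    (hmax : ∀ K ∈ elemSupergraphs H, G ≤ K → K = G)
    (B : Set V) (hB : IsMaximalBarrier G B) :
    G.IsClique B ∧ ∀ u ∈ B, ∀ v ∈ B, u ≠ v → ¬ IsExtendableEdge G u v := by
  refine ⟨fun u hu v hv huv => ?_, fun u hu v hv _ ⟨M, hM, huv⟩ =>
    hB.1.not_adj_of_isPerfectMatching hM hu hv huv⟩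
  have hmem : G ⊔ edge u v ∈ elemSupergraphs H :=
    ⟨hG.1.trans le_sup_left, (hB.1.numPM_sup_edge hu hv).trans hG.2⟩
  rw [← hmax _ hmem le_sup_left]
  simp [edge_adj, huv]

/-- if `G` is maximal in `(ℰ(H), ⊆)`, then every maximal barrier of `G` is a
clique all of whose edges are free. -/
theorem maximal_elemSupergraph_barriers_are_free_cliques [Finite V]
    (H G : SimpleGraph V) (hH : OneExtendable H)
    (hG : G ∈ elemSupergraphs H)
    (hmax : ∀ K ∈ elemSupergraphs H, G ≤ K → K = G)
    (B : Set V) (hB : IsMaximalBarrier G B) :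
    G.IsClique B ∧ ∀ u ∈ B, ∀ v ∈ B, u ≠ v → ¬ IsExtendableEdge G u v :=
  maximal_elemSupergraph_barriers_are_free_cliques_general H G hG hmax B hB
end

section
/- Let H be a bipartite 1-extendable graph with bipartition classes X₁ and X₂, and for i = 1, 2 let G_i be the graph obtained from H by adding all possible edges between pairs of vertices of X_i. Then G₁ and G₂ are the only two elements of ℰ(H) with the maximum number of edges, and each has exactly C(n(H)/2, 2) free edges, where n(H) is the number of vertices of H. -/
open SimpleGraph

variable {V : Type}

/-!
Write `Y = Xᶜ`. A bipartite 1-extendable graph satisfies the strict Hall condition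
`|N(S)| > |S|` for every nonempty proper `S ⊆ X` (and likewise inside `Y`). Let `K ∈ ℰ(H)`, so
that every perfect matching of `K` is one of `H`. Then `K` has no new edge `xy` across the sides,
since Hall's theorem matches `H - x - y`. For a perfect matching `f` of `H` and a new edge `cd`
inside `Y`, the pair `f c f d` is not an edge of `K` (otherwise exchange the matching edges at `c`
and `d` for `cd` and `f c f d`); so `f` maps the new edges inside `Y` injectively to non-edges of
`K` inside `X`, and `K` has at most `C(|X|, 2)` new edges, as many as `fillSide H X`.

In the extremal case this injection is onto. Suppose `ab ∈ K` inside `X` but `ac ∉ K`; then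
`f a f c ∈ K` for every `f`, so `H - a - b - f a - f c` has no perfect matching, and the Hall
obstruction is a tight set (`|N(S)| = |S| + 1`) through `c` with `f a, f c ∈ N(S)`. The greatest
such set `S` then has `N(N(S)) ⊆ S ∪ {a}`, against the strict Hall condition for `N(S)`. Hence the
new edges fill one side. In `fillSide H X` every perfect matching matches `Y` onto `X` along `H`,
so the free edges are exactly the added ones.
-/

open Set Function

namespace SimpleGraph

variable {G H : SimpleGraph V} {s t S : Set V} {f : V → V} {u v : V}

/-- A matching of `G` with vertex set `s`, encoded as the involution exchanging the ends of each
matching edge and fixing every vertex outside `s`. -/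
structure IsMatchingInvolution (G : SimpleGraph V) (s : Set V) (f : V → V) : Prop where
  involutive : Involutive f
  adj : ∀ v ∈ s, G.Adj v (f v)
  eq_self : ∀ v ∉ s, f v = v

def nbhd (G : SimpleGraph V) (S : Set V) : Set V := {y | ∃ x ∈ S, G.Adj x y}

lemma nbhd_mono {T : Set V} (h : S ⊆ T) : G.nbhd S ⊆ G.nbhd T :=
  fun _ ⟨x, hx, hxy⟩ => ⟨x, h hx, hxy⟩

lemma nbhd_union (S T : Set V) : G.nbhd (S ∪ T) = G.nbhd S ∪ G.nbhd T := by
  ext y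
  simp only [nbhd, mem_union, mem_ofPred_eq, or_and_right, exists_or]

lemma Subgraph.IsMatching.exists_isMatchingInvolution {M : G.Subgraph} (hM : M.IsMatching) :
    ∃ f, G.IsMatchingInvolution M.verts f ∧ ∀ ⦃u v⦄, M.Adj u v → f u = v := by
  classical
  set f : V → V := fun v => if hv : v ∈ M.verts then (hM hv).choose else v with hf
  have hadj : ∀ v ∈ M.verts, M.Adj v (f v) := fun v hv => by
    simpa [hf, hv] using (hM hv).choose_spec.1
  have huniq : ∀ ⦃u v⦄, M.Adj u v → f u = v := fun u v huv =>
    hM.eq_of_adj_left (hadj u (M.edge_vert huv)) huv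
  refine ⟨f, ⟨fun v => ?_, fun v hv => M.adj_sub (hadj v hv), fun v hv => by simp [hf, hv]⟩,
    huniq⟩
  by_cases hv : v ∈ M.verts
  · exact huniq (hadj v hv).symm
  · simp [hf, hv]

lemma Subgraph.IsPerfectMatching.exists_isMatchingInvolution {M : G.Subgraph}
    (hM : M.IsPerfectMatching) :
    ∃ f, G.IsMatchingInvolution univ f ∧ ∀ ⦃u v⦄, M.Adj u v → f u = v :=
  hM.2.verts_eq_univ ▸ hM.1.exists_isMatchingInvolution

namespace IsMatchingInvolution

lemma injective (hf : G.IsMatchingInvolution s f) : Injective f := hf.involutive.injective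

lemma apply_mem (hf : G.IsMatchingInvolution s f) (hv : v ∈ s) : f v ∈ s := by
  by_contra h
  have := hf.eq_self _ h
  rw [hf.involutive v] at this
  exact (hf.adj v hv).ne this

lemma mono (hf : G.IsMatchingInvolution s f) (hle : G ≤ H) : H.IsMatchingInvolution s f :=
  ⟨hf.involutive, fun v hv => hle (hf.adj v hv), hf.eq_self⟩

lemma image_subset_nbhd (hf : G.IsMatchingInvolution univ f) (S : Set V) :
    f '' S ⊆ G.nbhd S := by
  rintro _ ⟨x, hx, rfl⟩
  exact ⟨x, hx, hf.adj x trivial⟩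

lemma subsingleton_nbhd_sdiff_image [Finite V] (hf : G.IsMatchingInvolution univ f)
    (htight : (G.nbhd S).ncard = S.ncard + 1) : (G.nbhd S \ f '' S).Subsingleton := by
  rw [← ncard_le_one_iff_subsingleton, ncard_sdiff (hf.image_subset_nbhd S),
    ncard_image_of_injective _ hf.injective, htight]
  omega

lemma restrict [DecidablePred (· ∈ t)] (hf : G.IsMatchingInvolution s f) (ht : MapsTo f t t) :
    G.IsMatchingInvolution (s \ t) (t.piecewise id f) := by
  have hiff : ∀ v, f v ∈ t ↔ v ∈ t := fun v =>
    ⟨fun h => hf.involutive v ▸ ht h, fun h => ht h⟩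
  refine ⟨fun v => ?_, fun v hv => ?_, fun v hv => ?_⟩
  · by_cases hv : v ∈ t
    · simp [piecewise, hv]
    · simp [piecewise, hv, (hiff v).not.2 hv, hf.involutive v]
  · simpa [piecewise, hv.2] using hf.adj v hv.1
  · by_cases hvt : v ∈ t
    · simp [piecewise, hvt]
    · simp [piecewise, hvt, hf.eq_self v (by simpa [hvt] using hv)]

lemma swap_comp [DecidableEq V] (hf : G.IsMatchingInvolution s f) (hu : u ∉ s) (hv : v ∉ s)
    (huv : G.Adj u v) : G.IsMatchingInvolution (insert u (insert v s)) (Equiv.swap u v ∘ f) := by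
  have hfu := hf.eq_self u hu
  have hfv := hf.eq_self v hv
  have hfw : ∀ w ∈ s, f w ≠ u ∧ f w ≠ v := fun w hw =>
    ⟨fun h => hu (h ▸ hf.apply_mem hw), fun h => hv (h ▸ hf.apply_mem hw)⟩
  have hws : ∀ w ∈ s, w ≠ u ∧ w ≠ v := fun w hw => ⟨fun h => hu (h ▸ hw), fun h => hv (h ▸ hw)⟩
  refine ⟨fun w => ?_, fun w hw => ?_, fun w hw => ?_⟩
  · by_cases hw : w ∈ s
    · simp [Equiv.swap_apply_of_ne_of_ne (hfw w hw).1 (hfw w hw).2, hf.involutive w,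
        Equiv.swap_apply_of_ne_of_ne (hws w hw).1 (hws w hw).2]
    · simp only [comp_apply, hf.eq_self w hw]
      rcases eq_or_ne w u with rfl | hwu
      · simp [hfv]
      rcases eq_or_ne w v with rfl | hwv
      · simp [hfu]
      simp [Equiv.swap_apply_of_ne_of_ne hwu hwv, hf.eq_self w hw]
  · rcases hw with rfl | rfl | hw
    · simpa [hfu] using huv
    · simpa [hfv] using huv.symm
    · simpa [Equiv.swap_apply_of_ne_of_ne (hfw w hw).1 (hfw w hw).2] using hf.adj w hw
  · simp only [mem_insert_iff, not_or] at hw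
    simp [hf.eq_self w hw.2.2, Equiv.swap_apply_of_ne_of_ne hw.1 hw.2.1]

lemma exists_perfect_apply_eq_of_compl_pair [DecidableEq V]
    (hf : G.IsMatchingInvolution {u, v}ᶜ f) (huv : G.Adj u v) :
    ∃ g, G.IsMatchingInvolution univ g ∧ g u = v := by
  refine ⟨Equiv.swap u v ∘ f, ?_, ?_⟩
  · have hcover : insert u (insert v ({u, v}ᶜ : Set V)) = univ := by
      ext w; by_cases w = u <;> by_cases w = v <;> simp_all
    exact hcover ▸ hf.swap_comp (by simp) (by simp) huv
  · simp [hf.eq_self u (by simp)]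

lemma exists_perfect_apply_eq_of_compl_pair_pair [DecidableEq V] {a b c d : V}
    (hf : G.IsMatchingInvolution {a, b, c, d}ᶜ f) (hab : G.Adj a b) (hcd : G.Adj c d)
    (hac : a ≠ c) (had : a ≠ d) (hbc : b ≠ c) (hbd : b ≠ d) :
    ∃ g, G.IsMatchingInvolution univ g ∧ g a = b := by
  have hcover : insert c (insert d ({a, b, c, d}ᶜ : Set V)) = {a, b}ᶜ := by
    ext w
    by_cases w = c <;> by_cases w = d <;> simp_all [hac.symm, had.symm, hbc.symm, hbd.symm]
  exact (hcover ▸ hf.swap_comp (by simp) (by simp) hcd).exists_perfect_apply_eq_of_compl_pair hab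

def toSubgraph (hf : G.IsMatchingInvolution univ f) : G.Subgraph where
  verts := univ
  Adj u v := f u = v
  adj_sub := by rintro u _ rfl; exact hf.adj u trivial
  edge_vert _ := trivial
  symm := ⟨by rintro u _ rfl; exact hf.involutive u⟩

lemma isPerfectMatching_toSubgraph (hf : G.IsMatchingInvolution univ f) :
    hf.toSubgraph.IsPerfectMatching :=
  Subgraph.isPerfectMatching_iff.2 fun _ => existsUnique_eq'

end IsMatchingInvolution

lemma exists_isMatchingInvolution_of_forall_ncard_le [Finite V] {P Q : Set V}
    (hPQ : Disjoint P Q) (hcard : Q.ncard ≤ P.ncard)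
    (hhall : ∀ S ⊆ P, S.ncard ≤ (G.nbhd S ∩ Q).ncard) :
    ∃ f, G.IsMatchingInvolution (P ∪ Q) f := by
  classical
  have := Fintype.ofFinite V
  obtain ⟨g, hg, hadj⟩ := (Fintype.all_card_le_filter_rel_iff_exists_injective
      (fun (p : P) (q : Q) => G.Adj p q)).1 fun A => by
    have hQ : G.nbhd (Subtype.val '' (A : Set P)) ∩ Q =
        Subtype.val '' (({b | ∃ a ∈ A, G.Adj a b} : Finset Q) : Set Q) := by
      ext y
      simp [nbhd]
    have h := hhall (Subtype.val '' (A : Set P)) (by simp)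
    rwa [hQ, ncard_image_of_injective _ Subtype.val_injective,
      ncard_image_of_injective _ Subtype.val_injective, ncard_coe_finset, ncard_coe_finset] at h
  have hbij : Bijective g :=
    hg.bijective_of_nat_card_le (by rwa [Nat.card_coe_set_eq, Nat.card_coe_set_eq])
  obtain ⟨M, hMverts, hM⟩ := Subgraph.IsMatching.exists_of_disjoint_sets_of_equiv hPQ
    (Equiv.ofBijective g hbij) hadj
  obtain ⟨f, hf, -⟩ := hM.exists_isMatchingInvolution
  exact ⟨f, hMverts ▸ hf⟩

namespace IsBipartiteWith

variable {X Y : Set V}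

lemma nbhd_subset (hbip : G.IsBipartiteWith X Y) (hS : S ⊆ X) : G.nbhd S ⊆ Y := by
  rintro y ⟨x, hx, hxy⟩
  exact hbip.mem_of_mem_adj (hS hx) hxy

lemma disjoint_edgeSet_sym2 (hbip : G.IsBipartiteWith X Y) : Disjoint G.edgeSet X.sym2 := by
  refine Set.disjoint_left.2 fun e he hX => ?_
  induction e with
  | _ u v => exact Set.disjoint_left.1 hbip.disjoint hX.2 (hbip.mem_of_mem_adj hX.1 he)

lemma ncard_eq [Finite V] (hbip : G.IsBipartiteWith X Y) (hf : G.IsMatchingInvolution univ f) :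
    X.ncard = Y.ncard :=
  le_antisymm
    (ncard_le_ncard_of_injOn f (fun x hx => hbip.mem_of_mem_adj hx (hf.adj x trivial))
      hf.injective.injOn)
    (ncard_le_ncard_of_injOn f (fun y hy => hbip.symm.mem_of_mem_adj hy (hf.adj y trivial))
      hf.injective.injOn)

lemma exists_isMatchingInvolution_compl_union [Finite V] (hbip : G.IsBipartiteWith X Xᶜ)
    (hX : X.ncard = Xᶜ.ncard) {A B : Set V} (hA : A ⊆ X) (hB : B ⊆ Xᶜ) (hAB : A.ncard = B.ncard)
    (hhall : ∀ S ⊆ X \ A, S.ncard ≤ (G.nbhd S \ B).ncard) :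
    ∃ f, G.IsMatchingInvolution (A ∪ B)ᶜ f := by
  have hunion : X \ A ∪ Xᶜ \ B = (A ∪ B)ᶜ := by
    ext v
    by_cases hv : v ∈ X
    · simpa [hv] using fun _ h => hB h hv
    · simpa [hv] using fun _ h => hv (hA h)
  rw [← hunion]
  refine exists_isMatchingInvolution_of_forall_ncard_le
    (disjoint_compl_right.mono sdiff_subset sdiff_subset) ?_ fun S hS => ?_
  · rw [ncard_sdiff hA, ncard_sdiff hB, hX, hAB]
  · rw [← inter_sdiff_assoc, inter_eq_left.2 (hbip.nbhd_subset (hS.trans sdiff_subset))]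
    exact hhall S hS

end IsBipartiteWith

end SimpleGraph

lemma Set.ncard_sym2_sdiff_diagSet [Finite V] (X : Set V) :
    (X.sym2 \ Sym2.diagSet).ncard = X.ncard.choose 2 := by
  have himage :
      X.sym2 \ Sym2.diagSet = Sym2.map Subtype.val '' (Sym2.diagSet : Set (Sym2 X))ᶜ := by
    ext ⟨u, v⟩
    constructor
    · rintro ⟨⟨hu, hv⟩, huv⟩
      exact ⟨s(⟨u, hu⟩, ⟨v, hv⟩), by simpa using huv, rfl⟩
    · rintro ⟨⟨⟨u', hu'⟩, ⟨v', hv'⟩⟩, h, he⟩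
      rcases Sym2.eq_iff.1 he with ⟨rfl, rfl⟩ | ⟨rfl, rfl⟩ <;> simp_all [eq_comm]
  rw [himage, ncard_image_of_injective _ (Sym2.map.injective Subtype.val_injective),
    Sym2.ncard_diagSet_compl, Nat.card_coe_set_eq]

variable {H K : SimpleGraph V} {X Y S : Set V} {f : V → V} {u v : V}

def liftPerfectMatching (hle : H ≤ K) (M : {M : H.Subgraph // M.IsPerfectMatching}) :
    {M : K.Subgraph // M.IsPerfectMatching} :=
  ⟨⟨M.1.verts, M.1.Adj, fun h => hle (M.1.adj_sub h), M.1.edge_vert, M.1.symm⟩, M.2⟩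

lemma liftPerfectMatching_injective (hle : H ≤ K) : Injective (liftPerfectMatching hle) := by
  rintro ⟨M, _⟩ ⟨N, _⟩ h
  have hverts : M.verts = N.verts := congrArg (fun M => M.1.verts) h
  have hadj : M.Adj = N.Adj := congrArg (fun M => M.1.Adj) h
  exact Subtype.ext (Subgraph.ext hverts hadj)

lemma numPM_eq_iff [Finite V] (hle : H ≤ K) :
    numPM K = numPM H ↔
      ∀ M : K.Subgraph, M.IsPerfectMatching → ∀ ⦃u v⦄, M.Adj u v → H.Adj u v := by
  have hinj := liftPerfectMatching_injective hle
  rw [numPM, numPM]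
  constructor
  · intro h M hM u v huv
    obtain ⟨N, hN⟩ := (hinj.bijective_of_nat_card_le h.le).2 ⟨M, hM⟩
    obtain rfl := congrArg Subtype.val hN
    exact N.1.adj_sub huv
  · intro h
    refine (Nat.card_eq_of_bijective _ ⟨hinj, fun M => ?_⟩).symm
    exact ⟨⟨⟨M.1.verts, M.1.Adj, fun huv => h M.1 M.2 huv, M.1.edge_vert, M.1.symm⟩, M.2⟩, rfl⟩

lemma adj_of_mem_elemSupergraphs [Finite V] (hK : K ∈ elemSupergraphs H)
    (hf : K.IsMatchingInvolution univ f) (v : V) : H.Adj v (f v) :=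
  (numPM_eq_iff hK.1).1 hK.2 _ hf.isPerfectMatching_toSubgraph rfl

namespace OneExtendable

lemma exists_isMatchingInvolution (hH : OneExtendable H) :
    ∃ f, H.IsMatchingInvolution univ f := by
  obtain ⟨M, hM⟩ := hH.2.1
  obtain ⟨f, hf, -⟩ := hM.exists_isMatchingInvolution
  exact ⟨f, hf⟩

lemma exists_isMatchingInvolution_apply_eq (hH : OneExtendable H) (huv : H.Adj u v) :
    ∃ f, H.IsMatchingInvolution univ f ∧ f u = v := by
  obtain ⟨M, hM, hMuv⟩ := hH.2.2 huv
  obtain ⟨f, hf, hfM⟩ := hM.exists_isMatchingInvolution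
  exact ⟨f, hf, hfM hMuv⟩

variable [Finite V]

/-- If `|N(S)| = |S|`, every perfect matching would match `S` onto `N(S)`, so no edge leaving
`S ∪ N(S)` (one exists, by connectedness) would be extendable. -/
lemma ncard_lt_ncard_nbhd (hH : OneExtendable H) (hbip : H.IsBipartiteWith X Y)
    (hSX : S ⊆ X) (hS : S.Nonempty) (hne : S ≠ X) : S.ncard < (H.nbhd S).ncard := by
  obtain ⟨f₀, hf₀⟩ := hH.exists_isMatchingInvolution
  have hle : S.ncard ≤ (H.nbhd S).ncard :=
    ncard_le_ncard_of_injOn f₀ (fun x hx => hf₀.image_subset_nbhd S ⟨x, hx, rfl⟩)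
      hf₀.injective.injOn
  refine hle.lt_of_ne fun heq => ?_
  have himage : ∀ f, H.IsMatchingInvolution univ f → f '' S = H.nbhd S := fun f hf =>
    eq_of_subset_of_ncard_le (hf.image_subset_nbhd S)
      (by rw [ncard_image_of_injective _ hf.injective, heq])
  obtain ⟨s, hs⟩ := hS
  obtain ⟨t, htX, htS⟩ := exists_of_ssubset (hSX.ssubset_of_ne hne)
  have ht : t ∉ S ∪ H.nbhd S := fun h =>
    h.elim htS fun h' => Set.disjoint_left.1 hbip.disjoint htX (hbip.nbhd_subset hSX h')
  obtain ⟨d, -, hd, hd'⟩ :=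
    (hH.1.preconnected s t).some.exists_boundary_dart _ (Or.inl hs) ht
  have hfst : d.fst ∈ H.nbhd S := hd.resolve_left fun h => hd' (Or.inr ⟨_, h, d.adj⟩)
  obtain ⟨f, hf, hfd⟩ := hH.exists_isMatchingInvolution_apply_eq d.adj
  rw [← himage f hf] at hfst
  obtain ⟨x, hx, hxd⟩ := hfst
  rw [← hxd, hf.involutive] at hfd
  exact hd' (Or.inl (hfd ▸ hx))

lemma ncard_nbhd_union_of_tight (hH : OneExtendable H) (hbip : H.IsBipartiteWith X Y)
    {A B : Set V} (hA : A ⊆ X) (hB : B ⊆ X) (hAB : (A ∩ B).Nonempty) (hne : A ∪ B ≠ X)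
    (htA : (H.nbhd A).ncard = A.ncard + 1) (htB : (H.nbhd B).ncard = B.ncard + 1) :
    (H.nbhd (A ∪ B)).ncard = (A ∪ B).ncard + 1 := by
  have hinter := hH.ncard_lt_ncard_nbhd hbip (inter_subset_left.trans hA) hAB fun h =>
    hne (subset_antisymm (union_subset hA hB) (h ▸ inter_subset_left.trans subset_union_left))
  have hunion := hH.ncard_lt_ncard_nbhd hbip (union_subset hA hB)
    (hAB.mono (inter_subset_left.trans subset_union_left)) hne
  have hsub : (H.nbhd (A ∩ B)).ncard ≤ (H.nbhd A ∩ H.nbhd B).ncard :=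
    ncard_le_ncard (subset_inter (nbhd_mono inter_subset_left) (nbhd_mono inter_subset_right))
  have h₁ := ncard_union_add_ncard_inter A B
  have h₂ := ncard_union_add_ncard_inter (H.nbhd A) (H.nbhd B)
  rw [nbhd_union] at hunion ⊢
  omega

/-- `f a` is then the only vertex of `N(S) \ f(S)`, so `N(N(S)) ⊆ S ∪ {a}`, against the strict
Hall condition for `N(S)`. -/
lemma false_of_forall_apply_mem_nbhd (hH : OneExtendable H) (hbip : H.IsBipartiteWith X Y)
    {a : V} (hS : S ⊆ X) (htight : (H.nbhd S).ncard = S.ncard + 1) (hNY : H.nbhd S ≠ Y)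
    (haS : a ∉ S) (hexit : ∀ f, H.IsMatchingInvolution univ f → f a ∈ H.nbhd S) : False := by
  have hW : (H.nbhd S).Nonempty := nonempty_of_ncard_ne_zero (by omega)
  have hlt := hH.ncard_lt_ncard_nbhd hbip.symm (hbip.nbhd_subset hS) hW hNY
  have hsub : H.nbhd (H.nbhd S) ⊆ insert a S := by
    rintro x ⟨w, hw, hwx⟩
    obtain ⟨f, hf, rfl⟩ := hH.exists_isMatchingInvolution_apply_eq hwx
    by_cases hwS : w ∈ f '' S
    · obtain ⟨s, hs, rfl⟩ := hwS
      exact Or.inr (by rwa [hf.involutive])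
    · have hfa : f a ∉ f '' S := fun ⟨s, hs, hsa⟩ => haS (hf.injective hsa ▸ hs)
      have := hf.subsingleton_nbhd_sdiff_image htight ⟨hw, hwS⟩ ⟨hexit f hf, hfa⟩
      exact Or.inl (by rw [this, hf.involutive])
  have := (ncard_le_ncard hsub).trans (ncard_insert_le a S)
  omega

/-- Each of the given sets contains `c`, since `f c ≠ f a` cannot also lie outside `f(S)`. Tight
sets through `c` are closed under union, and the greatest one has `f a` in its neighbourhood for
every `f`. -/
lemma false_of_forall_exists_tight (hH : OneExtendable H) (hbip : H.IsBipartiteWith X Xᶜ)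
    {T : Set V} (hTX : T ⊆ X) (hT : T.ncard + 2 ≤ X.ncard) {a c : V} (haT : a ∉ T)
    (hac : a ≠ c)
    (htight : ∀ f, H.IsMatchingInvolution univ f → ∃ S ⊆ T,
      (H.nbhd S).ncard = S.ncard + 1 ∧ f a ∈ H.nbhd S ∧ f c ∈ H.nbhd S) : False := by
  obtain ⟨f₀, hf₀⟩ := hH.exists_isMatchingInvolution
  set F := {S | S ⊆ T ∧ c ∈ S ∧ (H.nbhd S).ncard = S.ncard + 1}
  have hTne : ∀ S ⊆ T, S ≠ X := fun S hS h => by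
    have := ncard_le_ncard (h ▸ hS : X ⊆ T)
    omega
  have hmem : ∀ f, H.IsMatchingInvolution univ f → ∃ S ∈ F, f a ∈ H.nbhd S := by
    intro f hf
    obtain ⟨S, hST, hS, hfa, hfc⟩ := htight f hf
    refine ⟨S, ⟨hST, by_contra fun hcS => hac (hf.injective ?_), hS⟩, hfa⟩
    refine hf.subsingleton_nbhd_sdiff_image hS ⟨hfa, ?_⟩ ⟨hfc, ?_⟩
    · exact fun ⟨s, hs, hsa⟩ => haT (hST (hf.injective hsa ▸ hs))
    · exact fun ⟨s, hs, hsc⟩ => hcS (hf.injective hsc ▸ hs)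
  obtain ⟨S₀, hS₀, -⟩ := hmem f₀ hf₀
  obtain ⟨S, hSF, hSmax⟩ := (toFinite F).exists_maximalFor ncard F ⟨S₀, hS₀⟩
  have hgreatest : ∀ S' ∈ F, S' ⊆ S := fun S' hS' => by
    have hunion : S ∪ S' ∈ F := ⟨union_subset hSF.1 hS'.1, Or.inl hSF.2.1,
      hH.ncard_nbhd_union_of_tight hbip (hSF.1.trans hTX) (hS'.1.trans hTX)
        ⟨c, hSF.2.1, hS'.2.1⟩ (hTne _ (union_subset hSF.1 hS'.1)) hSF.2.2 hS'.2.2⟩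
    have := eq_of_subset_of_ncard_le subset_union_left
      (hSmax hunion (ncard_le_ncard subset_union_left))
    exact this ▸ subset_union_right
  refine hH.false_of_forall_apply_mem_nbhd hbip (hSF.1.trans hTX) hSF.2.2 (fun h => ?_)
    (fun h => haT (hSF.1 h)) fun f hf => ?_
  · have hX := hbip.ncard_eq hf₀
    have hST := ncard_le_ncard hSF.1
    have hS := hSF.2.2
    rw [h] at hS
    omega
  · obtain ⟨S', hS', hfa⟩ := hmem f hf
    exact nbhd_mono (hgreatest S' hS') hfa

/-- By the strict Hall condition, Hall's condition for `H - a - b - f a - f c` can only fail at a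
set `S` with `|N(S)| = |S| + 1` and `f a, f c ∈ N(S)`. -/
lemma exists_tight_of_forall_not_isMatchingInvolution (hH : OneExtendable H)
    (hbip : H.IsBipartiteWith X Xᶜ) (hf : H.IsMatchingInvolution univ f) {a b c : V}
    (ha : a ∈ X) (hb : b ∈ X) (hc : c ∈ X) (hab : a ≠ b) (hac : a ≠ c)
    (hnot : ∀ g, ¬ H.IsMatchingInvolution ({a, b} ∪ {f a, f c})ᶜ g) :
    ∃ S ⊆ X \ {a, b}, (H.nbhd S).ncard = S.ncard + 1 ∧ f a ∈ H.nbhd S ∧ f c ∈ H.nbhd S := by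
  have hfac : f a ≠ f c := hf.injective.ne hac
  have hB : {f a, f c} ⊆ Xᶜ := pair_subset (hbip.mem_of_mem_adj ha (hf.adj a trivial))
    (hbip.mem_of_mem_adj hc (hf.adj c trivial))
  by_contra hcon
  push Not at hcon
  obtain ⟨g, hg⟩ := hbip.exists_isMatchingInvolution_compl_union (hbip.ncard_eq hf)
    (pair_subset ha hb) hB (by rw [ncard_pair hab, ncard_pair hfac]) fun S hS => by
      by_contra hlt
      push Not at hlt
      have hS' : S.Nonempty := nonempty_of_ncard_ne_zero (by omega)
      have hstrict := hH.ncard_lt_ncard_nbhd hbip (hS.trans sdiff_subset) hS'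
        fun h => (hS (h ▸ ha)).2 (by simp)
      have hsplit := ncard_inter_add_ncard_sdiff_eq_ncard (H.nbhd S) {f a, f c}
      have hI : H.nbhd S ∩ {f a, f c} = {f a, f c} := by
        refine eq_of_subset_of_ncard_le inter_subset_right ?_
        have := ncard_le_ncard (inter_subset_right : H.nbhd S ∩ {f a, f c} ⊆ _)
        rw [ncard_pair hfac] at this ⊢
        omega
      rw [hI, ncard_pair hfac] at hsplit
      have hpair : {f a, f c} ⊆ H.nbhd S := hI ▸ inter_subset_left
      exact hcon S hS (by omega) (hpair (by simp)) (hpair (by simp))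
  exact hnot g hg

end OneExtendable

lemma fillSide_adj : (fillSide H X).Adj u v ↔ H.Adj u v ∨ (u ≠ v ∧ u ∈ X ∧ v ∈ X) := by
  simp only [fillSide, sup_adj, fromRel_adj]
  tauto

lemma edgeSet_fillSide : (fillSide H X).edgeSet = H.edgeSet ∪ (X.sym2 \ Sym2.diagSet) := by
  ext ⟨u, v⟩
  simp only [mem_edgeSet, fillSide_adj, mem_union, mem_sdiff, mk_mem_sym2_iff, Sym2.mem_diagSet,
    Sym2.mk_isDiag_iff]
  tauto

section Finite

variable [Finite V]

lemma ncard_edgeSet_fillSide (hbip : H.IsBipartiteWith X Y) :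
    (fillSide H X).edgeSet.ncard = H.edgeSet.ncard + X.ncard.choose 2 := by
  rw [edgeSet_fillSide, ncard_union_eq (hbip.disjoint_edgeSet_sym2.mono_right sdiff_subset),
    ncard_sym2_sdiff_diagSet]

/-- In `fillSide H X` the vertices of `Xᶜ` keep only their `H`-neighbours, which lie in `X`; as
`|X| = |Xᶜ|`, a perfect matching therefore matches `Xᶜ` onto `X` along edges of `H`. -/
lemma adj_of_isPerfectMatching_fillSide (hbip : H.IsBipartiteWith X Xᶜ)
    (hX : X.ncard = Xᶜ.ncard) {M : (fillSide H X).Subgraph} (hM : M.IsPerfectMatching)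
    (huv : M.Adj u v) : H.Adj u v := by
  obtain ⟨f, hf, hfM⟩ := hM.exists_isMatchingInvolution
  have hcompl : ∀ y ∈ Xᶜ, H.Adj y (f y) := fun y hy =>
    (fillSide_adj.1 (hf.adj y trivial)).resolve_right fun h => hy h.2.1
  have himage : f '' Xᶜ = X := eq_of_subset_of_ncard_le
    (by rintro _ ⟨y, hy, rfl⟩; exact hbip.symm.mem_of_mem_adj hy (hcompl y hy))
    (by rw [ncard_image_of_injective _ hf.injective, hX])
  rw [← hfM huv]
  by_cases hu : u ∈ X
  · obtain ⟨y, hy, rfl⟩ := himage.symm ▸ hu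
    rw [hf.involutive]
    exact (hcompl y hy).symm
  · exact hcompl u hu

lemma fillSide_mem_elemSupergraphs (hbip : H.IsBipartiteWith X Xᶜ)
    (hX : X.ncard = Xᶜ.ncard) : fillSide H X ∈ elemSupergraphs H :=
  ⟨le_sup_left, (numPM_eq_iff le_sup_left).2 fun _ hM _ _ =>
    adj_of_isPerfectMatching_fillSide hbip hX hM⟩

lemma edgeSet_freeSubgraph_fillSide (hH : OneExtendable H)
    (hbip : H.IsBipartiteWith X Xᶜ) :
    (freeSubgraph (fillSide H X)).edgeSet = X.sym2 \ Sym2.diagSet := by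
  obtain ⟨f₀, hf₀⟩ := hH.exists_isMatchingInvolution
  have hX := hbip.ncard_eq hf₀
  ext ⟨u, v⟩
  simp only [freeSubgraph, mem_edgeSet, fillSide_adj]
  constructor
  · rintro ⟨h | h, hfree⟩
    · obtain ⟨M, hM, hMuv⟩ := hH.2.2 h
      exact absurd ⟨_, (liftPerfectMatching le_sup_left ⟨M, hM⟩).2, hMuv⟩ hfree
    · exact ⟨⟨h.2.1, h.2.2⟩, h.1⟩
  · rintro ⟨⟨hu, hv⟩, huv⟩
    refine ⟨Or.inr ⟨huv, hu, hv⟩, fun ⟨M, hM, hMuv⟩ => ?_⟩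
    exact hbip.mem_of_mem_adj hu (adj_of_isPerfectMatching_fillSide hbip hX hM hMuv) hv

lemma adj_of_mem_elemSupergraphs_of_mem_compl (hH : OneExtendable H)
    (hbip : H.IsBipartiteWith X Xᶜ) (hK : K ∈ elemSupergraphs H) (hu : u ∈ X) (hv : v ∈ Xᶜ)
    (huv : K.Adj u v) : H.Adj u v := by
  classical
  obtain ⟨f₀, hf₀⟩ := hH.exists_isMatchingInvolution
  obtain ⟨f, hf⟩ := hbip.exists_isMatchingInvolution_compl_union (hbip.ncard_eq hf₀)
    (singleton_subset_iff.2 hu) (singleton_subset_iff.2 hv) (by simp) fun S hS => by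
      rcases S.eq_empty_or_nonempty with rfl | hne
      · simp
      have hlt := hH.ncard_lt_ncard_nbhd hbip (hS.trans sdiff_subset) hne
        fun h => (hS (h ▸ hu)).2 rfl
      have := ncard_le_ncard_sdiff_add_ncard (H.nbhd S) {v}
      rw [ncard_singleton] at this
      omega
  rw [singleton_union] at hf
  obtain ⟨g, hg, rfl⟩ := (hf.mono hK.1).exists_perfect_apply_eq_of_compl_pair huv
  exact adj_of_mem_elemSupergraphs hK hg u

lemma edgeSet_eq_of_mem_elemSupergraphs (hH : OneExtendable H) (hbip : H.IsBipartiteWith X Xᶜ)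
    (hK : K ∈ elemSupergraphs H) :
    K.edgeSet = H.edgeSet ∪ (K.edgeSet ∩ X.sym2) ∪ (K.edgeSet ∩ Xᶜ.sym2) := by
  refine subset_antisymm (fun e he => ?_) (union_subset (union_subset (edgeSet_mono hK.1)
    inter_subset_left) inter_subset_left)
  induction e with
  | _ u v =>
    by_cases hu : u ∈ X <;> by_cases hv : v ∈ X
    · exact Or.inl (Or.inr ⟨he, hu, hv⟩)
    · exact Or.inl (Or.inl (adj_of_mem_elemSupergraphs_of_mem_compl hH hbip hK hu hv he))
    · exact Or.inl (Or.inl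
        (adj_of_mem_elemSupergraphs_of_mem_compl hH hbip hK hv hu he.symm).symm)
    · exact Or.inr ⟨he, hu, hv⟩

lemma ncard_edgeSet_of_mem_elemSupergraphs (hH : OneExtendable H) (hbip : H.IsBipartiteWith X Xᶜ)
    (hK : K ∈ elemSupergraphs H) :
    K.edgeSet.ncard = H.edgeSet.ncard + (K.edgeSet ∩ X.sym2).ncard +
      (K.edgeSet ∩ Xᶜ.sym2).ncard := by
  have hsides : Disjoint X.sym2 Xᶜ.sym2 := by
    rw [Set.disjoint_iff_inter_eq_empty, ← sym2_inter, inter_compl_self, sym2_empty]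
  have hdisj₁ : Disjoint H.edgeSet (K.edgeSet ∩ X.sym2) :=
    hbip.disjoint_edgeSet_sym2.mono_right inter_subset_right
  have hdisj₂ : Disjoint (H.edgeSet ∪ K.edgeSet ∩ X.sym2) (K.edgeSet ∩ Xᶜ.sym2) :=
    (hbip.symm.disjoint_edgeSet_sym2.mono_right inter_subset_right).union_left
      (hsides.mono inter_subset_right inter_subset_right)
  rw [congrArg ncard (edgeSet_eq_of_mem_elemSupergraphs hH hbip hK), ncard_union_eq hdisj₂,
    ncard_union_eq hdisj₁]

lemma map_mem_of_mem_elemSupergraphs (hbip : H.IsBipartiteWith X Xᶜ) (hK : K ∈ elemSupergraphs H)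
    (hf : H.IsMatchingInvolution univ f) {e : Sym2 V} (he : e ∈ K.edgeSet ∩ Xᶜ.sym2) :
    Sym2.map f e ∈ (X.sym2 \ Sym2.diagSet) \ K.edgeSet := by
  classical
  induction e with
  | _ c d =>
    obtain ⟨hcd, hc, hd⟩ := he
    have hfc : f c ∈ X := hbip.symm.mem_of_mem_adj hc (hf.adj c trivial)
    have hfd : f d ∈ X := hbip.symm.mem_of_mem_adj hd (hf.adj d trivial)
    refine ⟨⟨⟨hfc, hfd⟩, hf.injective.ne (K.ne_of_adj hcd)⟩, fun hK' => ?_⟩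
    have ht : MapsTo f {c, d, f c, f d} {c, d, f c, f d} := by
      rintro v (rfl | rfl | rfl | rfl) <;> simp [hf.involutive _]
    have hrestrict := (hf.mono hK.1).restrict ht
    rw [← compl_eq_univ_sdiff] at hrestrict
    obtain ⟨g, hg, hgc⟩ := hrestrict.exists_perfect_apply_eq_of_compl_pair_pair hcd hK'
      (fun h => hc (h ▸ hfc)) (fun h => hc (h ▸ hfd)) (fun h => hd (h ▸ hfc))
      (fun h => hd (h ▸ hfd))
    have := adj_of_mem_elemSupergraphs hK hg c
    rw [hgc] at this
    exact hd (hbip.symm.mem_of_mem_adj hc this)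

lemma union_image_map_subset (hbip : H.IsBipartiteWith X Xᶜ) (hK : K ∈ elemSupergraphs H)
    (hf : H.IsMatchingInvolution univ f) :
    K.edgeSet ∩ X.sym2 ∪ Sym2.map f '' (K.edgeSet ∩ Xᶜ.sym2) ⊆ X.sym2 \ Sym2.diagSet :=
  union_subset (fun _ he => ⟨he.2, K.not_isDiag_of_mem_edgeSet he.1⟩)
    (image_subset_iff.2 fun _ he => (map_mem_of_mem_elemSupergraphs hbip hK hf he).1)

lemma ncard_union_image_map (hbip : H.IsBipartiteWith X Xᶜ) (hK : K ∈ elemSupergraphs H)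
    (hf : H.IsMatchingInvolution univ f) :
    (K.edgeSet ∩ X.sym2 ∪ Sym2.map f '' (K.edgeSet ∩ Xᶜ.sym2)).ncard =
      (K.edgeSet ∩ X.sym2).ncard + (K.edgeSet ∩ Xᶜ.sym2).ncard := by
  rw [ncard_union_eq, ncard_image_of_injective _ (Sym2.map.injective hf.injective)]
  exact Set.disjoint_right.2 fun _ ⟨r, hr, hre⟩ he =>
    (map_mem_of_mem_elemSupergraphs hbip hK hf hr).2 (hre ▸ he.1)

lemma ncard_add_ncard_le_of_mem_elemSupergraphs (hH : OneExtendable H)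
    (hbip : H.IsBipartiteWith X Xᶜ) (hK : K ∈ elemSupergraphs H) :
    (K.edgeSet ∩ X.sym2).ncard + (K.edgeSet ∩ Xᶜ.sym2).ncard ≤ X.ncard.choose 2 := by
  obtain ⟨f, hf⟩ := hH.exists_isMatchingInvolution
  rw [← ncard_union_image_map hbip hK hf, ← ncard_sym2_sdiff_diagSet]
  exact ncard_le_ncard (union_image_map_subset hbip hK hf)

lemma map_mem_of_ncard_add_ncard_eq (hbip : H.IsBipartiteWith X Xᶜ) (hK : K ∈ elemSupergraphs H)
    (heq : (K.edgeSet ∩ X.sym2).ncard + (K.edgeSet ∩ Xᶜ.sym2).ncard = X.ncard.choose 2)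
    (hf : H.IsMatchingInvolution univ f) {e : Sym2 V} (he : e ∈ X.sym2 \ Sym2.diagSet)
    (heK : e ∉ K.edgeSet) : Sym2.map f e ∈ K.edgeSet ∩ Xᶜ.sym2 := by
  have hunion := eq_of_subset_of_ncard_le (union_image_map_subset hbip hK hf)
    (by rw [ncard_union_image_map hbip hK hf, heq, ncard_sym2_sdiff_diagSet])
  rcases hunion ▸ he with h | ⟨r, hr, rfl⟩
  · exact absurd h.1 heK
  · rwa [Sym2.map_map, hf.involutive.comp_self, Sym2.map_id, id_eq]

lemma mem_edgeSet_of_ncard_add_ncard_eq (hH : OneExtendable H) (hbip : H.IsBipartiteWith X Xᶜ)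
    (hK : K ∈ elemSupergraphs H)
    (heq : (K.edgeSet ∩ X.sym2).ncard + (K.edgeSet ∩ Xᶜ.sym2).ncard = X.ncard.choose 2)
    {a b c : V} (ha : a ∈ X) (hb : b ∈ X) (hc : c ∈ X) (hab : s(a, b) ∈ K.edgeSet)
    (hac : a ≠ c) : s(a, c) ∈ K.edgeSet := by
  classical
  by_contra hacK
  have habne : a ≠ b := K.ne_of_adj hab
  have hT : (X \ {a, b}).ncard + 2 ≤ X.ncard := by
    have := ncard_le_ncard (pair_subset ha hb)
    rw [ncard_pair habne] at this
    rw [ncard_sdiff (pair_subset ha hb), ncard_pair habne]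
    omega
  refine hH.false_of_forall_exists_tight hbip sdiff_subset hT (fun h => h.2 (by simp)) hac
    fun f hf => hH.exists_tight_of_forall_not_isMatchingInvolution hbip hf ha hb hc habne hac
      fun g hg => ?_
  have hfac : s(f a, f c) ∈ K.edgeSet ∩ Xᶜ.sym2 :=
    map_mem_of_ncard_add_ncard_eq hbip hK heq hf ⟨mk_mem_sym2_iff.2 ⟨ha, hc⟩, hac⟩ hacK
  have hfa : f a ∉ X := hfac.2.1
  have hfc : f c ∉ X := hfac.2.2
  rw [insert_union, singleton_union] at hg
  obtain ⟨g', hg', hg'a⟩ := (hg.mono hK.1).exists_perfect_apply_eq_of_compl_pair_pair hab hfac.1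
    (fun h => hfa (h ▸ ha)) (fun h => hfc (h ▸ ha)) (fun h => hfa (h ▸ hb)) (fun h => hfc (h ▸ hb))
  have := adj_of_mem_elemSupergraphs hK hg' a
  rw [hg'a] at this
  exact hbip.mem_of_mem_adj ha this hb

lemma sym2_sdiff_diagSet_subset_of_ncard_add_ncard_eq (hH : OneExtendable H)
    (hbip : H.IsBipartiteWith X Xᶜ) (hK : K ∈ elemSupergraphs H)
    (heq : (K.edgeSet ∩ X.sym2).ncard + (K.edgeSet ∩ Xᶜ.sym2).ncard = X.ncard.choose 2)
    (hne : (K.edgeSet ∩ X.sym2).Nonempty) : X.sym2 \ Sym2.diagSet ⊆ K.edgeSet := by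
  obtain ⟨e, heK, heX⟩ := hne
  induction e with
  | _ a b =>
    have hstar : ∀ x ∈ X, a ≠ x → s(a, x) ∈ K.edgeSet := fun x hx hax =>
      mem_edgeSet_of_ncard_add_ncard_eq hH hbip hK heq heX.1 heX.2 hx heK hax
    rintro ⟨u, w⟩ ⟨⟨hu, hw⟩, huw⟩
    rcases eq_or_ne u a with rfl | hua
    · exact hstar w hw huw
    · exact mem_edgeSet_of_ncard_add_ncard_eq hH hbip hK heq hu heX.1 hw
        (Sym2.eq_swap ▸ hstar u hu (Ne.symm hua)) huw

lemma eq_fillSide_of_subset (hle : H ≤ K) (hsub : X.sym2 \ Sym2.diagSet ⊆ K.edgeSet)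
    (hcard : K.edgeSet.ncard ≤ (fillSide H X).edgeSet.ncard) : K = fillSide H X := by
  have hfill : (fillSide H X).edgeSet ⊆ K.edgeSet := by
    rw [edgeSet_fillSide]
    exact union_subset (edgeSet_mono hle) hsub
  exact edgeSet_injective (eq_of_subset_of_ncard_le hfill hcard).symm

lemma eq_fillSide_or_eq_fillSide_compl (hH : OneExtendable H) (hbip : H.IsBipartiteWith X Xᶜ)
    (hK : K ∈ elemSupergraphs H)
    (hcard : K.edgeSet.ncard = (fillSide H X).edgeSet.ncard) :
    K = fillSide H X ∨ K = fillSide H Xᶜ := by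
  obtain ⟨f₀, hf₀⟩ := hH.exists_isMatchingInvolution
  have hX := hbip.ncard_eq hf₀
  have hsplit := ncard_edgeSet_of_mem_elemSupergraphs hH hbip hK
  rw [ncard_edgeSet_fillSide hbip] at hcard
  have heq : (K.edgeSet ∩ X.sym2).ncard + (K.edgeSet ∩ Xᶜ.sym2).ncard = X.ncard.choose 2 := by
    omega
  rcases (K.edgeSet ∩ X.sym2).eq_empty_or_nonempty with hempty | hne
  · right
    have hsub : K.edgeSet ∩ Xᶜ.sym2 ⊆ Xᶜ.sym2 \ Sym2.diagSet :=
      fun _ he => ⟨he.2, K.not_isDiag_of_mem_edgeSet he.1⟩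
    have hall := eq_of_subset_of_ncard_le hsub (by
      rw [ncard_sym2_sdiff_diagSet, ← hX]
      rw [hempty, ncard_empty] at heq
      omega)
    refine eq_fillSide_of_subset hK.1 (hall ▸ inter_subset_left) ?_
    rw [ncard_edgeSet_fillSide hbip.symm, ← hX]
    omega
  · left
    exact eq_fillSide_of_subset hK.1
      (sym2_sdiff_diagSet_subset_of_ncard_add_ncard_eq hH hbip hK heq hne)
      (by rw [ncard_edgeSet_fillSide hbip]; omega)

end Finite

/-- for a bipartite 1-extendable graph `H` with sides `X₁, X₂`, the graphs
obtained by filling `X₁` resp. `X₂` are the only maximum-size elements of `ℰ(H)`, each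
with exactly `C(n/2, 2)` free edges. -/
theorem bipartite_maximum_elemSupergraphs [Finite V]
    (H : SimpleGraph V) (hH : OneExtendable H)
    (X₁ X₂ : Set V) (hdisj : X₁ ∩ X₂ = ∅) (hunion : X₁ ∪ X₂ = Set.univ)
    (hbip : ∀ u v : V, H.Adj u v → (u ∈ X₁ ∧ v ∈ X₂) ∨ (u ∈ X₂ ∧ v ∈ X₁)) :
    (fillSide H X₁ ∈ elemSupergraphs H ∧ fillSide H X₂ ∈ elemSupergraphs H) ∧
    (∀ K ∈ elemSupergraphs H, K.edgeSet.ncard ≤ (fillSide H X₁).edgeSet.ncard) ∧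
    (fillSide H X₂).edgeSet.ncard = (fillSide H X₁).edgeSet.ncard ∧
    (∀ K ∈ elemSupergraphs H, K.edgeSet.ncard = (fillSide H X₁).edgeSet.ncard →
      K = fillSide H X₁ ∨ K = fillSide H X₂) ∧
    (freeSubgraph (fillSide H X₁)).edgeSet.ncard = Nat.choose (Nat.card V / 2) 2 ∧
    (freeSubgraph (fillSide H X₂)).edgeSet.ncard = Nat.choose (Nat.card V / 2) 2 := by
  obtain rfl : X₂ = X₁ᶜ := (compl_unique hdisj hunion).symm
  have hbip₁ : H.IsBipartiteWith X₁ X₁ᶜ := ⟨disjoint_compl_right, hbip⟩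
  have hbip₂ : H.IsBipartiteWith X₁ᶜ X₁ᶜᶜ := by
    rw [compl_compl]
    exact hbip₁.symm
  obtain ⟨f, hf⟩ := hH.exists_isMatchingInvolution
  have hX := hbip₁.ncard_eq hf
  have hhalf : Nat.card V / 2 = X₁.ncard := by
    have := ncard_add_ncard_compl X₁
    omega
  refine ⟨⟨fillSide_mem_elemSupergraphs hbip₁ hX,
      fillSide_mem_elemSupergraphs hbip₂ (by rw [compl_compl, hX])⟩,
    fun K hK => ?_, ?_, fun K hK => eq_fillSide_or_eq_fillSide_compl hH hbip₁ hK, ?_, ?_⟩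
  · have := ncard_add_ncard_le_of_mem_elemSupergraphs hH hbip₁ hK
    rw [ncard_edgeSet_of_mem_elemSupergraphs hH hbip₁ hK, ncard_edgeSet_fillSide hbip₁]
    omega
  · rw [ncard_edgeSet_fillSide hbip₁, ncard_edgeSet_fillSide hbip₁.symm, hX]
  · rw [edgeSet_freeSubgraph_fillSide hH hbip₁, ncard_sym2_sdiff_diagSet, hhalf]
  · rw [edgeSet_freeSubgraph_fillSide hH hbip₂, ncard_sym2_sdiff_diagSet, hhalf, hX]
end

section
/- Let H ⊂ H′ be a non-refinable ear augmentation between 1-extendable graphs H and H′, where H′ is obtained from H by augmenting one or two ears of even order. If B′ is a barrier of H′, then B = B′ ∩ V(H) is a barrier of H. -/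
open SimpleGraph

variable {V : Type}

/-! Deleting a vertex of degree at most two raises the number of odd components by at most
one: its component falls into at most two pieces, and the number of odd components always has
the parity of the number of vertices. Removing the inner ear vertices of `B'` one at a time
thus gives `o(H' - B') ≤ o(H' - B) + |B' \ V(H)|`. In `H' - B` the inner vertices of the
even ears are paired off by ear edges, so each odd component contains an odd component of
`H - B`, and `o(H' - B) ≤ o(H - B) ≤ |B|` by Tutte's condition for `H`. The chain
`|B'| = o(H' - B') ≤ |B| + |B' \ V(H)| = |B'|` is therefore tight, and `o(H - B) = |B|`. -/

theorem Set.even_ncard_of_involution {α : Type*} [Finite α] {s : Set α} (σ : α → α)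
    (hσ : ∀ a ∈ s, σ a ≠ a) (hmem : ∀ a ∈ s, σ a ∈ s) (hinv : ∀ a ∈ s, σ (σ a) = a) :
    Even s.ncard := by
  classical
  have := Fintype.ofFinite α
  have hsum : ∑ _ ∈ s.toFinset, (1 : ZMod 2) = 0 :=
    Finset.sum_involution (fun a _ => σ a) (fun _ _ => by decide)
      (fun a ha _ => hσ a (by simpa using ha))
      (fun a ha => by simpa using hmem a (by simpa using ha))
      (fun a ha => hinv a (by simpa using ha))
  rw [Finset.sum_const, nsmul_eq_mul, mul_one, ZMod.natCast_eq_zero_iff_even] at hsum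
  rwa [Set.ncard_eq_toFinset_card']

theorem Set.ncard_preimage_inl_add_ncard_preimage_inr {α β : Type*} [Finite α] [Finite β]
    (s : Set (α ⊕ β)) : (Sum.inl ⁻¹' s).ncard + (Sum.inr ⁻¹' s).ncard = s.ncard := by
  conv_rhs => rw [← Set.image_preimage_inl_union_image_preimage_inr s]
  rw [Set.ncard_union_eq Set.disjoint_image_inl_image_inr,
    Set.ncard_image_of_injective _ Sum.inl_injective,
    Set.ncard_image_of_injective _ Sum.inr_injective]

namespace SimpleGraph

variable {α β : Type*} {G : SimpleGraph α} {G' : SimpleGraph β}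

theorem Iso.ncard_oddComponents_eq (e : G ≃g G') :
    G.oddComponents.ncard = G'.oddComponents.ncard := by
  rw [← Nat.card_coe_set_eq, ← Nat.card_coe_set_eq]
  refine Nat.card_congr (e.connectedComponentEquiv.subtypeEquiv fun c => ?_)
  show Odd c.supp.ncard ↔ Odd (e.connectedComponentEquiv c).supp.ncard
  rw [← Nat.card_coe_set_eq, ← Nat.card_coe_set_eq, Nat.card_congr (c.isoEquivSupp e)]

namespace Embedding

-- Under `hι : Set.range ι = {v}ᶜ`, the embedding `ι` presents `G'` as `G - v`.
variable (ι : G' ↪g G) {v : α}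

theorem reachable_or_reachable_adj_of_range_eq_compl (hι : Set.range ι = {v}ᶜ) {u : β}
    {z : α} (h : G.Reachable (ι u) z) :
    (∃ z', ι z' = z ∧ G'.Reachable u z') ∨ ∃ n, G.Adj (ι n) v ∧ G'.Reachable u n := by
  suffices ∀ {a} (p : G.Walk a z) (u : β), ι u = a →
      (∃ z', ι z' = z ∧ G'.Reachable u z') ∨ ∃ n, G.Adj (ι n) v ∧ G'.Reachable u n from
    h.elim fun p => this p u rfl
  clear h
  intro a p
  induction p with
  | nil => exact fun u hu => .inl ⟨u, hu, .rfl⟩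
  | @cons a b _ hab q ih =>
    intro u hu
    subst hu
    by_cases hb : b = v
    · exact .inr ⟨u, hb ▸ hab, .rfl⟩
    obtain ⟨b', rfl⟩ : b ∈ Set.range ι := hι ▸ hb
    have hub : G'.Reachable u b' := (ι.map_adj_iff.mp hab).reachable
    rcases ih b' rfl with ⟨z', hz', hr⟩ | ⟨n, hn, hr⟩
    · exact .inl ⟨z', hz', hub.trans hr⟩
    · exact .inr ⟨n, hn, hub.trans hr⟩

theorem supp_map_eq_image_of_ne (hι : Set.range ι = {v}ᶜ) (c : G'.ConnectedComponent)
    (hc : c.map ι.toHom ≠ G.connectedComponentMk v) :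
    (c.map ι.toHom).supp = ι '' c.supp := by
  induction c using ConnectedComponent.ind with | _ u => ?_
  rw [ConnectedComponent.map_mk] at hc ⊢
  ext z
  simp only [ConnectedComponent.mem_supp_iff, Set.mem_image]
  constructor
  · intro hz
    rcases ι.reachable_or_reachable_adj_of_range_eq_compl hι
      (ConnectedComponent.exact hz).symm with ⟨z', rfl, hr⟩ | ⟨n, hn, hr⟩
    · exact ⟨z', (ConnectedComponent.sound hr).symm, rfl⟩
    · exact absurd (ConnectedComponent.sound ((hr.map ι.toHom).trans hn.reachable)) hc
  · rintro ⟨z', hz', rfl⟩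
    change G.connectedComponentMk (ι.toHom z') = _
    rw [← ConnectedComponent.map_mk, hz', ConnectedComponent.map_mk]

theorem ncard_map_eq_connectedComponentMk_le [Finite β] (hι : Set.range ι = {v}ᶜ) :
    {c : G'.ConnectedComponent | c.map ι.toHom = G.connectedComponentMk v}.ncard ≤
      (G.neighborSet v).ncard := by
  have hsub : {c : G'.ConnectedComponent | c.map ι.toHom = G.connectedComponentMk v} ⊆
      G'.connectedComponentMk '' (ι ⁻¹' G.neighborSet v) := by
    intro c hc
    induction c using ConnectedComponent.ind with | _ u => ?_
    rw [Set.mem_ofPred_eq, ConnectedComponent.map_mk] at hc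
    rcases ι.reachable_or_reachable_adj_of_range_eq_compl hι (ConnectedComponent.exact hc) with
      ⟨z', hz', -⟩ | ⟨n, hn, hr⟩
    · exact absurd (hι ▸ Set.mem_range_self z' : ι z' ∈ ({v}ᶜ : Set α)) (by simp [hz'])
    · exact ⟨n, hn.symm, (ConnectedComponent.sound hr).symm⟩
  calc _ ≤ (G'.connectedComponentMk '' (ι ⁻¹' G.neighborSet v)).ncard := Set.ncard_le_ncard hsub
    _ ≤ (ι ⁻¹' G.neighborSet v).ncard := Set.ncard_image_le
    _ = (G.neighborSet v).ncard := Set.ncard_preimage_of_injective_subset_range ι.injective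
        (hι ▸ fun _ hn => (G.ne_of_adj hn).symm)

theorem ncard_oddComponents_le_add_one [Finite α] (hι : Set.range ι = {v}ᶜ)
    (hdeg : (G.neighborSet v).ncard ≤ 2) :
    G'.oddComponents.ncard ≤ G.oddComponents.ncard + 1 := by
  have : Finite β := Finite.of_injective ι ι.injective
  set χ := ConnectedComponent.map ι.toHom
  set F := {c : G'.ConnectedComponent | χ c = G.connectedComponentMk v}
  have hsupp (c : G'.ConnectedComponent) (hc : c ∉ F) : (χ c).supp.ncard = c.supp.ncard := by
    rw [ι.supp_map_eq_image_of_ne hι c hc, Set.ncard_image_of_injective _ ι.injective]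
  have hrest : (G'.oddComponents \ F).ncard ≤ G.oddComponents.ncard := by
    refine Set.ncard_le_ncard_of_injOn χ (fun c hc => ?_) (fun c hc c' hc' h => ?_)
    · show Odd _; rw [hsupp c hc.2]; exact hc.1
    · rw [← ConnectedComponent.supp_inj, ← Set.image_eq_image ι.injective,
        ← ι.supp_map_eq_image_of_ne hι c hc.2, ← ι.supp_map_eq_image_of_ne hι c' hc'.2]
      exact congrArg _ h
  have hcard : Nat.card β + 1 = Nat.card α := by
    rw [← Nat.card_range_of_injective ι.injective, hι, Nat.card_coe_set_eq, add_comm,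
      ← Set.ncard_singleton v]
    exact Set.ncard_add_ncard_compl _
  have hsplit := Set.ncard_le_ncard_sdiff_add_ncard G'.oddComponents F
  have hF : F.ncard ≤ _ := ι.ncard_map_eq_connectedComponentMk_le hι
  have hpar : Odd (G'.oddComponents.ncard + G.oddComponents.ncard) := by
    rw [Nat.odd_add, odd_ncard_oddComponents, ← Nat.not_odd_iff_even, odd_ncard_oddComponents,
      ← hcard, Nat.odd_add_one, not_not]
  rw [Nat.odd_iff] at hpar
  omega

end Embedding

theorem exists_mem_oddComponents_supp_subset [Finite α] {X : Set α}
    (hX : ∀ ⦃u w⦄, u ∈ X → G.Reachable u w → w ∈ X) (hodd : Odd X.ncard) :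
    ∃ c ∈ G.oddComponents, c.supp ⊆ X := by
  classical
  have := Fintype.ofFinite α
  by_contra! h
  have hunion : X.toFinset = ({c | c.supp ⊆ X} : Finset G.ConnectedComponent).biUnion
      (fun c => c.supp.toFinset) := by
    ext z
    simp only [Set.mem_toFinset, Finset.mem_biUnion, Finset.mem_filter, Finset.mem_univ,
      true_and]
    refine ⟨fun hz => ⟨G.connectedComponentMk z, fun w hw => hX hz ?_, rfl⟩,
      fun ⟨c, hc, hz⟩ => hc hz⟩
    exact (ConnectedComponent.exact hw).symm
  rw [Set.ncard_eq_toFinset_card', hunion, Finset.card_biUnion fun c _ c' _ hcc' =>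
    Set.disjoint_toFinset.mpr (G.pairwise_disjoint_supp_connectedComponent hcc')] at hodd
  refine Nat.not_even_iff_odd.mpr hodd (Finset.even_sum _ fun c hc => ?_)
  rw [← Set.ncard_eq_toFinset_card', ← Nat.not_odd_iff_even]
  exact fun hc' => h c hc' (by simpa using hc)

theorem ConnectedComponent.even_ncard_supp_sdiff [Finite α] (c : G.ConnectedComponent)
    {s : Set α} (σ : α → α) (hσ : ∀ a ∉ s, σ a ∉ s ∧ σ (σ a) = a ∧ G.Adj a (σ a)) :
    Even (c.supp \ s).ncard := by
  refine Set.even_ncard_of_involution σ (fun a ha => (G.ne_of_adj (hσ a ha.2).2.2).symm)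
    (fun a ha => ⟨?_, (hσ a ha.2).1⟩) (fun a ha => (hσ a ha.2).2.1)
  exact (c.mem_supp_iff _).mpr (((c.mem_supp_iff a).mp ha.1) ▸
    (ConnectedComponent.sound (hσ a ha.2).2.2.reachable).symm)

theorem ncard_oddComponents_le_of_injective [Finite α] [Finite β] (f : G →g G')
    (hf : Function.Injective f)
    (heven : ∀ c : G'.ConnectedComponent, Even (c.supp \ Set.range f).ncard) :
    G'.oddComponents.ncard ≤ G.oddComponents.ncard := by
  have hex (c' : G'.ConnectedComponent) (hc' : c' ∈ G'.oddComponents) :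
      ∃ c ∈ G.oddComponents, c.supp ⊆ f ⁻¹' c'.supp := by
    refine exists_mem_oddComponents_supp_subset (fun u w hu huw => ?_) ?_
    · exact (c'.mem_supp_iff _).mpr (((c'.mem_supp_iff _).mp hu) ▸
        (ConnectedComponent.sound (huw.map f)).symm)
    · have hsplit := Set.ncard_inter_add_ncard_sdiff_eq_ncard c'.supp (Set.range f)
      rw [← Set.ncard_preimage_of_injective_subset_range hf Set.inter_subset_right,
        Set.preimage_inter_range] at hsplit
      have hc' : Odd c'.supp.ncard := hc'
      rw [← hsplit] at hc'
      exact (Nat.odd_add.mp hc').mpr (heven c')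
  choose g hg hsub using hex
  rw [← Nat.card_coe_set_eq, ← Nat.card_coe_set_eq]
  refine Nat.card_le_card_of_injective (fun c' => ⟨g c' c'.2, hg c' c'.2⟩) fun c₁ c₂ h => ?_
  have h : g c₁ c₁.2 = g c₂ c₂.2 := congrArg Subtype.val h
  obtain ⟨u, hu⟩ := (g c₁ c₁.2).nonempty_supp
  exact Subtype.ext (ConnectedComponent.eq_of_common_vertex (hsub c₁ c₁.2 hu)
    (hsub c₂ c₂.2 (h ▸ hu)))

end SimpleGraph

theorem oddComponentCount_eq_ncard_oddComponents (G : SimpleGraph V) (S : Set V) :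
    oddComponentCount G S = (G.induce Sᶜ).oddComponents.ncard := by
  rw [oddComponentCount, ← Nat.card_coe_set_eq]
  simp only [Nat.card_coe_set_eq]
  rfl

def SimpleGraph.deleteVertsTopIsoInduce (G : SimpleGraph V) (S : Set V) :
    ((⊤ : G.Subgraph).deleteVerts S).coe ≃g G.induce Sᶜ where
  toEquiv := Equiv.setCongr (by ext; simp)
  map_rel_iff' := by simp +contextual

theorem oddComponentCount_le_ncard_of_isPerfectMatching [Finite V] {G : SimpleGraph V}
    {M : G.Subgraph} (hM : M.IsPerfectMatching) (S : Set V) :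
    oddComponentCount G S ≤ S.ncard := by
  rw [oddComponentCount_eq_ncard_oddComponents,
    ← (G.deleteVertsTopIsoInduce S).ncard_oddComponents_eq]
  exact not_lt.mp (SimpleGraph.not_isTutteViolator_of_isPerfectMatching hM S)

theorem oddComponentCount_insert_le [Finite V] (G : SimpleGraph V) (S : Set V) {v : V}
    (hv : v ∉ S) (hdeg : (G.neighborSet v).ncard ≤ 2) :
    oddComponentCount G (insert v S) ≤ oddComponentCount G S + 1 := by
  rw [oddComponentCount_eq_ncard_oddComponents, oddComponentCount_eq_ncard_oddComponents]
  refine (G.induceHomOfLE (Set.compl_subset_compl.mpr (Set.subset_insert v S))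
    ).ncard_oddComponents_le_add_one (v := ⟨v, hv⟩) ?_ ?_
  · ext ⟨z, hz⟩
    simpa [Set.inclusion] using fun _ => hz
  · rw [SimpleGraph.neighborSet_induce]
    exact (Set.ncard_le_ncard_of_injOn Subtype.val (fun _ h => h)
      Subtype.val_injective.injOn).trans hdeg

theorem oddComponentCount_union_le [Finite V] (G : SimpleGraph V) (S T : Set V)
    (hT : ∀ v ∈ T, (G.neighborSet v).ncard ≤ 2) :
    oddComponentCount G (S ∪ T) ≤ oddComponentCount G S + T.ncard := by
  induction T, T.toFinite using Set.Finite.induction_on with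
  | empty => simp
  | @insert v T hvT hT' ih =>
    rw [Set.union_insert, Set.ncard_insert_of_notMem hvT hT']
    have ih := ih fun w hw => hT w (Set.mem_insert_of_mem v hw)
    by_cases hv : v ∈ S ∪ T
    · rw [Set.insert_eq_of_mem hv]; omega
    · have := oddComponentCount_insert_le G (S ∪ T) hv (hT v (Set.mem_insert v T))
      omega

def Fin.pairPartner {n : ℕ} (hn : Even n) (i : Fin n) : Fin n :=
  if h : (i : ℕ) % 2 = 0 then ⟨i + 1, by obtain ⟨k, hk⟩ := hn; omega⟩ else ⟨i - 1, by omega⟩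

theorem Fin.val_pairPartner {n : ℕ} (hn : Even n) (i : Fin n) :
    (pairPartner hn i : ℕ) = if (i : ℕ) % 2 = 0 then (i : ℕ) + 1 else (i : ℕ) - 1 := by
  unfold pairPartner; split_ifs <;> rfl

theorem Fin.pairPartner_pairPartner {n : ℕ} (hn : Even n) (i : Fin n) :
    pairPartner hn (pairPartner hn i) = i := by
  ext; rw [val_pairPartner, val_pairPartner]; split_ifs <;> omega

section EarsAugment

variable {H : SimpleGraph V} {m : ℕ} {x y : Fin m → V} {ℓ : Fin m → ℕ}

theorem earsAugment_adj_inl {u v : V} (h : H.Adj u v) :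
    (earsAugment H m x y ℓ).Adj (.inl u) (.inl v) := by
  simp [earsAugment, h, h.ne]

theorem earsAugment_adj_pairPartner (hℓ : ∀ j, Even (ℓ j)) (j : Fin m) (i : Fin (ℓ j)) :
    (earsAugment H m x y ℓ).Adj (.inr ⟨j, i⟩) (.inr ⟨j, i.pairPartner (hℓ j)⟩) := by
  have := Fin.val_pairPartner (hℓ j) i
  simp only [earsAugment, fromRel_adj, ne_eq, Sum.inr.injEq, Sigma.mk.injEq, heq_eq_eq, true_and]
  split_ifs at this <;> refine ⟨fun h => by rw [← h] at this; omega, by omega⟩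

theorem earsAugment_neighborSet_inr_subset (j : Fin m) (i : Fin (ℓ j)) :
    (earsAugment H m x y ℓ).neighborSet (.inr ⟨j, i⟩) ⊆
      {earVertex x y ℓ j i, earVertex x y ℓ j (i + 2)} := by
  rintro (u | ⟨j', i'⟩) h
  · simp only [earsAugment, mem_neighborSet, fromRel_adj, ne_eq, reduceCtorEq, not_false_eq_true,
      true_and] at h
    rcases h with ⟨rfl, hi⟩ | ⟨rfl, hi⟩
    · refine Or.inr (Eq.symm ?_)
      rw [earVertex, dif_neg (by omega), if_neg (by omega)]
    · refine Or.inl (Eq.symm ?_)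
      rw [earVertex, dif_neg (by omega), if_pos hi]
  · simp only [earsAugment, mem_neighborSet, fromRel_adj, ne_eq, Sum.inr.injEq, Sigma.mk.injEq,
      not_and] at h
    obtain ⟨-, ⟨rfl, hi⟩ | ⟨rfl, hi⟩⟩ := h
    · refine Or.inr (Eq.symm ?_)
      rw [earVertex, dif_pos (by omega)]
      exact congrArg Sum.inr (Sigma.ext rfl (heq_of_eq (Fin.ext (by dsimp only; omega))))
    · refine Or.inl (Eq.symm ?_)
      rw [earVertex, dif_pos (by omega)]
      exact congrArg Sum.inr (Sigma.ext rfl (heq_of_eq (Fin.ext (by dsimp only; omega))))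

theorem earsAugment_ncard_neighborSet_inr_le_two (j : Fin m) (i : Fin (ℓ j)) :
    ((earsAugment H m x y ℓ).neighborSet (.inr ⟨j, i⟩)).ncard ≤ 2 :=
  (Set.ncard_le_ncard (earsAugment_neighborSet_inr_subset j i)).trans
    ((Set.ncard_insert_le _ _).trans (by rw [Set.ncard_singleton]))

theorem oddComponentCount_earsAugment_image_inl_le [Finite V] (hℓ : ∀ j, Even (ℓ j))
    (B : Set V) :
    oddComponentCount (earsAugment H m x y ℓ) (.inl '' B) ≤ oddComponentCount H B := by
  rw [oddComponentCount_eq_ncard_oddComponents, oddComponentCount_eq_ncard_oddComponents]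
  let f : H.induce Bᶜ →g (earsAugment H m x y ℓ).induce (.inl '' B)ᶜ :=
    ⟨fun u => ⟨.inl u, Sum.inl_injective.mem_set_image.not.mpr u.2⟩,
      fun h => earsAugment_adj_inl h⟩
  let σ : ((Sum.inl '' B)ᶜ : Set (V ⊕ (Σ j : Fin m, Fin (ℓ j)))) → ((Sum.inl '' B)ᶜ : Set _)
    | ⟨.inl u, hu⟩ => ⟨.inl u, hu⟩
    | ⟨.inr ⟨j, i⟩, _⟩ => ⟨.inr ⟨j, i.pairPartner (hℓ j)⟩, by simp⟩
  refine SimpleGraph.ncard_oddComponents_le_of_injective f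
    (fun u w h => Subtype.ext (Sum.inl_injective (congrArg Subtype.val h)))
    fun c => c.even_ncard_supp_sdiff σ ?_
  rintro ⟨u | ⟨j, i⟩, hz⟩ hf
  · exact absurd ⟨⟨u, by simpa using hz⟩, rfl⟩ hf
  · refine ⟨?_, ?_, earsAugment_adj_pairPartner (H := H) (x := x) (y := y) hℓ j i⟩
    · rintro ⟨w, hw⟩
      exact Sum.inl_ne_inr (congrArg Subtype.val hw)
    · simp [σ, Fin.pairPartner_pairPartner]

theorem oddComponentCount_earsAugment_le [Finite V] (hℓ : ∀ j, Even (ℓ j))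
    (B' : Set (V ⊕ (Σ j : Fin m, Fin (ℓ j)))) :
    oddComponentCount (earsAugment H m x y ℓ) B' ≤
      oddComponentCount H (Sum.inl ⁻¹' B') + (Sum.inr ⁻¹' B').ncard := by
  calc oddComponentCount (earsAugment H m x y ℓ) B'
      ≤ oddComponentCount (earsAugment H m x y ℓ) (.inl '' (Sum.inl ⁻¹' B')) +
          (Sum.inr '' (Sum.inr ⁻¹' B')).ncard := by
        conv_lhs => rw [← Set.image_preimage_inl_union_image_preimage_inr B']
        refine oddComponentCount_union_le _ _ _ ?_
        rintro _ ⟨⟨j, i⟩, -, rfl⟩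
        exact earsAugment_ncard_neighborSet_inr_le_two j i
    _ ≤ oddComponentCount H (Sum.inl ⁻¹' B') + (Sum.inr ⁻¹' B').ncard := by
        rw [Set.ncard_image_of_injective _ Sum.inr_injective]
        exact Nat.add_le_add_right (oddComponentCount_earsAugment_image_inl_le hℓ _) _

end EarsAugment

theorem barrier_trace_of_ear_augmentation_general [Finite V]
    (H : SimpleGraph V) (m : ℕ)
    (x y : Fin m → V) (ℓ : Fin m → ℕ) (hsys : IsEarSystem H m x y ℓ)
    (hH : OneExtendable H)
    (B' : Set (V ⊕ (Σ j : Fin m, Fin (ℓ j))))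
    (hB' : IsBarrier (earsAugment H m x y ℓ) B') :
    IsBarrier H {v : V | Sum.inl v ∈ B'} := by
  obtain ⟨-, ⟨M, hM⟩, -⟩ := hH
  have hcount := oddComponentCount_earsAugment_le (H := H) (x := x) (y := y) hsys.2.1 B'
  have htutte := oddComponentCount_le_ncard_of_isPerfectMatching hM (Sum.inl ⁻¹' B')
  have hsplit := Set.ncard_preimage_inl_add_ncard_preimage_inr B'
  change oddComponentCount _ B' = _ at hB'
  change oddComponentCount H (Sum.inl ⁻¹' B') = (Sum.inl ⁻¹' B').ncard
  omega

/-- in a non-refinable augmentation by one or two even-order ears between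
1-extendable graphs, the trace on `V(H)` of any barrier of the augmented graph is a
barrier of `H`. -/
theorem barrier_trace_of_ear_augmentation [Finite V]
    (H : SimpleGraph V) (m : ℕ) (hm : m = 1 ∨ m = 2)
    (x y : Fin m → V) (ℓ : Fin m → ℕ) (hsys : IsEarSystem H m x y ℓ)
    (hH : OneExtendable H) (hH' : OneExtendable (earsAugment H m x y ℓ))
    (hnonref : NonRefinableSystem H m x y ℓ)
    (B' : Set (V ⊕ (Σ j : Fin m, Fin (ℓ j))))
    (hB' : IsBarrier (earsAugment H m x y ℓ) B') :
    IsBarrier H {v : V | Sum.inl v ∈ B'} :=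
  barrier_trace_of_ear_augmentation_general H m x y ℓ hsys hH B' hB'
end
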